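/- arXiv:2405.04204 — 9 statements merged into one kernel-verified Lean document; each statement's English description precedes it below -/
import Mathlib

section
/- Let d ≥ 1, let a ∈ L^∞(ℝ^d; ℝ^{d×d}) be a matrix-valued function, let b ∈ ℝ^{d×d} be a constant matrix, and let ω ⊂ ℝ^d be an open bounded set with 0 ∈ ω. Let x₀ be a 2-Lebesgue point of a (i.e., lim_{r→0+} (1/|B(x₀,r)|) ∫_{B(x₀,r)} |a(y) − a(x₀)|_F² dy = 0, with |·|_F the Frobenius norm). For r > 0 set a_r := a + χ_{x₀ + rω}(b − a), set T_r(x') := x₀ + r x', and define ã : ℝ^d → ℝ^{d×d} by ã := χ_ω·b + χ_{ω^c}·a(x₀). Then for every n ∈ ℕ, lim_{r→0+} ∫_{nω} |a_r(T_r(x')) − ã(x')|_F² dx' = 0. -/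
/-!
On `ω` the rescaled coefficient `a_r ∘ T_r` equals `b = ã`, and off `ω` it equals `a ∘ T_r` while
`ã = a(x₀)`; so the integrand is at most `|a(x₀ + r x') - a(x₀)|_F²`. Integrating this over a ball
`B(0, R) ⊇ nω` and substituting `y = x₀ + r x'` gives `R^d |B(0, 1)|` times the mean of
`|a - a(x₀)|_F²` over `B(x₀, rR)`, which tends to `0` at a `2`-Lebesgue point.
-/

open MeasureTheory Topology Filter Pointwise
open scoped Classical

/-- Squared Frobenius norm of a real matrix: `|M|_F² = ∑ i j, (M i j)²`. -/
noncomputable def frobSq {d : ℕ} (M : Matrix (Fin d) (Fin d) ℝ) : ℝ :=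
  ∑ i, ∑ j, (M i j) ^ 2

open Metric Module

lemma frobSq_nonneg {d : ℕ} (M : Matrix (Fin d) (Fin d) ℝ) : 0 ≤ frobSq M :=
  Finset.sum_nonneg fun _ _ => Finset.sum_nonneg fun _ _ => sq_nonneg _

lemma frobSq_zero {d : ℕ} : frobSq (0 : Matrix (Fin d) (Fin d) ℝ) = 0 := by
  simp [frobSq]

lemma frobSq_sub_le {d : ℕ} (M N : Matrix (Fin d) (Fin d) ℝ) :
    frobSq (M - N) ≤ 2 * frobSq M + 2 * frobSq N := by
  have h : ∀ i j, (M i j - N i j) ^ 2 ≤ 2 * (M i j) ^ 2 + 2 * (N i j) ^ 2 := fun i j => by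
    nlinarith [sq_nonneg (M i j + N i j)]
  calc frobSq (M - N) = ∑ i, ∑ j, (M i j - N i j) ^ 2 := by simp [frobSq]
    _ ≤ ∑ i, ∑ j, (2 * (M i j) ^ 2 + 2 * (N i j) ^ 2) :=
        Finset.sum_le_sum fun i _ => Finset.sum_le_sum fun j _ => h i j
    _ = 2 * frobSq M + 2 * frobSq N := by
        simp [frobSq, Finset.sum_add_distrib, Finset.mul_sum]

lemma integrableOn_frobSq_sub {α : Type*} [MeasurableSpace α] {μ : Measure α} {d : ℕ}
    {a : α → Matrix (Fin d) (Fin d) ℝ} (ha_meas : ∀ i j, Measurable fun x => a x i j) {C : ℝ}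
    (ha_bdd : ∀ᵐ x ∂μ, frobSq (a x) ≤ C) (M : Matrix (Fin d) (Fin d) ℝ) {s : Set α}
    (hs : μ s ≠ ⊤) : IntegrableOn (fun x => frobSq (a x - M)) s μ := by
  have hmeas : Measurable fun x => frobSq (a x - M) :=
    Finset.measurable_sum _ fun i _ => Finset.measurable_sum _ fun j _ =>
      ((ha_meas i j).sub_const (M i j)).pow_const 2
  refine Measure.integrableOn_of_bounded (M := 2 * C + 2 * frobSq M) hs
    hmeas.aestronglyMeasurable ?_
  filter_upwards [ae_restrict_of_ae ha_bdd] with x hx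
  rw [Real.norm_of_nonneg (frobSq_nonneg _)]
  linarith [frobSq_sub_le (a x) M]

lemma setIntegral_le_setIntegral_of_subset {α : Type*} [MeasurableSpace α] {μ : Measure α}
    {s t : Set α} {f g : α → ℝ} (hst : s ⊆ t) (hg : IntegrableOn g t μ) (hf : ∀ x, 0 ≤ f x)
    (hfg : ∀ x, f x ≤ g x) : ∫ x in s, f x ∂μ ≤ ∫ x in t, g x ∂μ :=
  (integral_mono_of_nonneg (ae_of_all _ hf) (hg.mono_set hst) (ae_of_all _ hfg)).trans
    (setIntegral_mono_set hg (ae_of_all _ fun x => (hf x).trans (hfg x)) hst.eventuallyLE)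

section Blowup

variable {E : Type*} [NormedAddCommGroup E] [NormedSpace ℝ E]

lemma preimage_add_smul_ball (x₀ : E) {r : ℝ} (hr : 0 < r) (R : ℝ) :
    (fun x => x₀ + r • x) ⁻¹' ball x₀ (R * r) = ball 0 R := by
  ext x
  simp [dist_eq_norm, norm_smul, abs_of_pos hr, mul_comm R, mul_lt_mul_iff_right₀ hr]

lemma indicator_comp_add_smul_ball (g : E → ℝ) (x₀ : E) {r : ℝ} (hr : 0 < r) (R : ℝ) :
    (fun x => (ball x₀ (R * r)).indicator g (x₀ + r • x)) =
      (ball 0 R).indicator fun x => g (x₀ + r • x) := by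
  ext x
  rw [← preimage_add_smul_ball x₀ hr R]
  exact (Set.indicator_comp_right _).symm

variable [FiniteDimensional ℝ E] [MeasurableSpace E] [BorelSpace E] (μ : Measure E)
  [μ.IsAddHaarMeasure]

lemma MeasureTheory.IntegrableOn.comp_add_smul_ball {g : E → ℝ} {x₀ : E} {r R : ℝ} (hr : 0 < r)
    (hg : IntegrableOn g (ball x₀ (R * r)) μ) :
    IntegrableOn (fun x => g (x₀ + r • x)) (ball 0 R) μ := by
  rw [← integrable_indicator_iff measurableSet_ball, ← indicator_comp_add_smul_ball g x₀ hr]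
  exact ((hg.integrable_indicator measurableSet_ball).comp_add_left x₀).comp_smul hr.ne'

lemma setIntegral_ball_comp_add_smul (g : E → ℝ) (x₀ : E) {r : ℝ} (hr : 0 < r) (R : ℝ) :
    ∫ x in ball 0 R, g (x₀ + r • x) ∂μ =
      (r ^ finrank ℝ E)⁻¹ * ∫ y in ball x₀ (R * r), g y ∂μ := by
  rw [← integral_indicator measurableSet_ball, ← indicator_comp_add_smul_ball g x₀ hr,
    Measure.integral_comp_smul_of_nonneg μ (fun y => (ball x₀ (R * r)).indicator g (x₀ + y)) r
      (hR := hr.le), integral_add_left_eq_self, integral_indicator measurableSet_ball, smul_eq_mul]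

lemma tendsto_setIntegral_ball_comp_add_smul {g : E → ℝ} {x₀ : E}
    (hg : Tendsto (fun r => (μ (ball x₀ r)).toReal⁻¹ * ∫ y in ball x₀ r, g y ∂μ) (𝓝[>] 0) (𝓝 0))
    {R : ℝ} (hR : 0 < R) :
    Tendsto (fun r : ℝ => ∫ x in ball 0 R, g (x₀ + r • x) ∂μ) (𝓝[>] 0) (𝓝 0) := by
  have hscale : Tendsto (R * ·) (𝓝[>] 0) (𝓝[>] 0) :=
    tendsto_iff_comap.2 (comap_mulLeft_nhdsGT_zero hR).ge
  have hmean := (hg.comp hscale).const_mul (R ^ finrank ℝ E * (μ (ball 0 1)).toReal)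
  rw [mul_zero] at hmean
  refine hmean.congr' ?_
  filter_upwards [self_mem_nhdsWithin] with r (hr : 0 < r)
  have hv : (μ (ball 0 1)).toReal ≠ 0 :=
    ENNReal.toReal_ne_zero.2 ⟨(measure_ball_pos μ 0 one_pos).ne', measure_ball_lt_top.ne⟩
  rw [setIntegral_ball_comp_add_smul μ g x₀ hr, Function.comp_apply,
    Measure.addHaar_ball_of_pos μ x₀ (mul_pos hR hr), ENNReal.toReal_mul,
    ENNReal.toReal_ofReal (by positivity), mul_pow]
  field_simp

end Blowup

lemma frobSq_blowup_sub_le {E : Type*} [AddCommGroup E] [Module ℝ E] {d : ℕ}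
    {a ar atil : E → Matrix (Fin d) (Fin d) ℝ} {b : Matrix (Fin d) (Fin d) ℝ} {ω : Set E}
    {x₀ : E} {r : ℝ} (hr : r ≠ 0)
    (har : ∀ x, ar x = if x ∈ (fun x' => x₀ + r • x') '' ω then b else a x)
    (hatil : ∀ x', atil x' = if x' ∈ ω then b else a x₀) (x' : E) :
    frobSq (ar (x₀ + r • x') - atil x') ≤ frobSq (a (x₀ + r • x') - a x₀) := by
  have hT : Function.Injective fun x' : E => x₀ + r • x' :=
    (add_right_injective x₀).comp (smul_right_injective E hr)
  rw [har, hatil, hT.mem_set_image]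
  split_ifs
  · rw [sub_self, frobSq_zero]
    exact frobSq_nonneg _
  · exact le_rfl

theorem stmt_2_general (d : ℕ)
    (a : EuclideanSpace ℝ (Fin d) → Matrix (Fin d) (Fin d) ℝ)
    (ha_meas : ∀ i j, Measurable fun x => a x i j)
    (C : ℝ) (ha_bdd : ∀ᵐ x ∂volume, frobSq (a x) ≤ C)
    (b : Matrix (Fin d) (Fin d) ℝ)
    (ω : Set (EuclideanSpace ℝ (Fin d)))
    (hωb : Bornology.IsBounded ω)
    (x₀ : EuclideanSpace ℝ (Fin d))
    (hx₀ : Tendsto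
      (fun r : ℝ =>
        (volume (Metric.ball x₀ r)).toReal⁻¹ *
          ∫ y in Metric.ball x₀ r, frobSq (a y - a x₀))
      (𝓝[>] 0) (𝓝 0))
    (ar : ℝ → EuclideanSpace ℝ (Fin d) → Matrix (Fin d) (Fin d) ℝ)
    (har : ∀ r x, ar r x = if x ∈ (fun x' => x₀ + r • x') '' ω then b else a x)
    (atil : EuclideanSpace ℝ (Fin d) → Matrix (Fin d) (Fin d) ℝ)
    (hatil : ∀ x', atil x' = if x' ∈ ω then b else a x₀) :
    ∀ n : ℕ,
      Tendsto (fun r : ℝ => ∫ x' in (n : ℝ) • ω, frobSq (ar r (x₀ + r • x') - atil x'))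
        (𝓝[>] 0) (𝓝 0) := by
  intro n
  obtain ⟨R, hR, hnω⟩ := (hωb.smul₀ (n : ℝ)).subset_ball_lt 0 0
  refine squeeze_zero' (Eventually.of_forall fun r => integral_nonneg fun _ => frobSq_nonneg _)
    ?_ (tendsto_setIntegral_ball_comp_add_smul volume hx₀ hR)
  filter_upwards [self_mem_nhdsWithin] with r (hr : 0 < r)
  exact setIntegral_le_setIntegral_of_subset hnω
    ((integrableOn_frobSq_sub ha_meas ha_bdd (a x₀) measure_ball_lt_top.ne).comp_add_smul_ball
      volume hr)
    (fun _ => frobSq_nonneg _) (frobSq_blowup_sub_le hr.ne' (har r) hatil)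

/-- Convergence of the rescaled perturbed coefficients: if `x₀` is a `2`-Lebesgue point of
the essentially bounded matrix-valued `a`, `a_r := a + χ_{x₀+rω}(b-a)`, `T_r(x') = x₀ + r x'`,
and `ã := χ_ω b + χ_{ω^c} a(x₀)`, then `a_r ∘ T_r → ã` in `L²(nω)` for every `n ∈ ℕ`. -/
theorem stmt_2 (d : ℕ) (hd : 1 ≤ d)
    (a : EuclideanSpace ℝ (Fin d) → Matrix (Fin d) (Fin d) ℝ)
    (ha_meas : ∀ i j, Measurable fun x => a x i j)
    (C : ℝ) (ha_bdd : ∀ᵐ x ∂volume, frobSq (a x) ≤ C)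
    (b : Matrix (Fin d) (Fin d) ℝ)
    (ω : Set (EuclideanSpace ℝ (Fin d))) (hωo : IsOpen ω)
    (hωb : Bornology.IsBounded ω) (h0 : (0 : EuclideanSpace ℝ (Fin d)) ∈ ω)
    (x₀ : EuclideanSpace ℝ (Fin d))
    (hx₀ : Tendsto
      (fun r : ℝ =>
        (volume (Metric.ball x₀ r)).toReal⁻¹ *
          ∫ y in Metric.ball x₀ r, frobSq (a y - a x₀))
      (𝓝[>] 0) (𝓝 0))
    (ar : ℝ → EuclideanSpace ℝ (Fin d) → Matrix (Fin d) (Fin d) ℝ)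
    (har : ∀ r x, ar r x = if x ∈ (fun x' => x₀ + r • x') '' ω then b else a x)
    (atil : EuclideanSpace ℝ (Fin d) → Matrix (Fin d) (Fin d) ℝ)
    (hatil : ∀ x', atil x' = if x' ∈ ω then b else a x₀) :
    ∀ n : ℕ,
      Tendsto (fun r : ℝ => ∫ x' in (n : ℝ) • ω, frobSq (ar r (x₀ + r • x') - atil x'))
        (𝓝[>] 0) (𝓝 0) :=
  stmt_2_general d a ha_meas C ha_bdd b ω hωb x₀ hx₀ ar har atil hatil
end

section
/- Let y, p ∈ ℝ² be given and let D = diag(λ1, λ2) be a real diagonal 2×2 matrix. For R ∈ ℝ^{2×2} define F(R) := pᵀ Rᵀ D R y. Then the range of F over O(2) equals its range over SO(2), and both equal the closed interval { ((λ1+λ2)/2)·(yᵀp) + t·(|λ1−λ2|/2)·‖y‖₂·‖p‖₂ : t ∈ [−1, 1] }. -/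
open Matrix

/-- Euclidean norm on `ℝ²` (as `Fin 2 → ℝ`). -/
noncomputable def euclidNorm2 (y : Fin 2 → ℝ) : ℝ := Real.sqrt (y 0 ^ 2 + y 1 ^ 2)

lemma exists_xw (a b : ℝ) (hab : a^2 + b^2 = 1) :
    ∃ x w : ℝ, x^2 + w^2 = 1 ∧ x^2 - w^2 = a ∧ -(2*x*w) = b := by
  by_cases ha : a = -1
  · have hb : b = 0 := by nlinarith [sq_nonneg b]
    exact ⟨0, 1, by norm_num, by norm_num [ha], by norm_num [hb]⟩
  · have h1a : 0 ≤ (1+a)/2 := by nlinarith [sq_nonneg b]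
    have hpos : 0 < (1+a)/2 := by
      rcases lt_or_eq_of_le h1a with h | h
      · exact h
      · exact absurd (by linarith) ha
    have hx2 : Real.sqrt ((1+a)/2) ^2 = (1+a)/2 := Real.sq_sqrt h1a
    have hxpos : 0 < Real.sqrt ((1+a)/2) := Real.sqrt_pos.mpr hpos
    set x := Real.sqrt ((1+a)/2) with hxdef
    clear_value x
    refine ⟨x, -b/(2*x), ?_, ?_, ?_⟩
    · field_simp; nlinarith [hx2]
    · field_simp; nlinarith [hx2]
    · field_simp

set_option maxHeartbeats 2000000 in
/-- For `F(R) := pᵀ Rᵀ D R y` with `D = diag(λ1, λ2)`, the range of `F` over `O(2)` equals its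
range over `SO(2)`, and both equal the interval
`((λ1+λ2)/2)·(yᵀp) + [-1,1]·(|λ1-λ2|/2)·‖y‖₂‖p‖₂`. -/
theorem stmt_3 (y p : Fin 2 → ℝ) (l1 l2 : ℝ)
    (D : Matrix (Fin 2) (Fin 2) ℝ) (hD : D = Matrix.diagonal ![l1, l2])
    (F : Matrix (Fin 2) (Fin 2) ℝ → ℝ)
    (hF : ∀ R, F R = p ⬝ᵥ (Rᵀ * D * R) *ᵥ y) :
    F '' {R | Rᵀ * R = 1} = F '' {R | Rᵀ * R = 1 ∧ R.det = 1} ∧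
    F '' {R | Rᵀ * R = 1} =
      {z : ℝ | ∃ t ∈ Set.Icc (-1 : ℝ) 1,
        z = (l1 + l2) / 2 * (y ⬝ᵥ p) + t * (|l1 - l2| / 2 * (euclidNorm2 y * euclidNorm2 p))} := by
  have hyp : y ⬝ᵥ p = y 0 * p 0 + y 1 * p 1 := by
    simp [dotProduct, Fin.sum_univ_two]
  have hFval : ∀ R : Matrix (Fin 2) (Fin 2) ℝ, F R =
      l1 * ((R 0 0 * p 0 + R 0 1 * p 1) * (R 0 0 * y 0 + R 0 1 * y 1)) +
      l2 * ((R 1 0 * p 0 + R 1 1 * p 1) * (R 1 0 * y 0 + R 1 1 * y 1)) := by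
    intro R
    rw [hF, hD]
    simp [Matrix.mul_apply, Matrix.mulVec, dotProduct, Fin.sum_univ_two, Matrix.diagonal]
    ring
  set A : ℝ := p 0 * y 0 - p 1 * y 1 with hAdef
  set B : ℝ := p 0 * y 1 + p 1 * y 0 with hBdef
  have hr : euclidNorm2 y * euclidNorm2 p = Real.sqrt (A^2 + B^2) := by
    unfold euclidNorm2
    rw [← Real.sqrt_mul (by positivity)]
    congr 1
    rw [hAdef, hBdef]; ring
  clear_value A B
  have hsqrtnn : (0:ℝ) ≤ Real.sqrt (A^2+B^2) := Real.sqrt_nonneg _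
  have hsqrtsq : Real.sqrt (A^2+B^2) ^ 2 = A^2+B^2 := Real.sq_sqrt (by positivity)
  -- Forward: O(2) image ⊆ interval
  have hOI : F '' {R | Rᵀ * R = 1} ⊆
      {z : ℝ | ∃ t ∈ Set.Icc (-1 : ℝ) 1,
        z = (l1 + l2) / 2 * (y ⬝ᵥ p) + t * (|l1 - l2| / 2 * (euclidNorm2 y * euclidNorm2 p))} := by
    rintro z ⟨R, hR, rfl⟩
    simp only [Set.mem_setOf_eq] at hR
    have e00 : R 0 0 ^2 + R 1 0 ^2 = 1 := by
      have := congrFun (congrFun hR 0) 0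
      simpa [Matrix.mul_apply, Fin.sum_univ_two, sq] using this
    have e11 : R 0 1 ^2 + R 1 1 ^2 = 1 := by
      have := congrFun (congrFun hR 1) 1
      simpa [Matrix.mul_apply, Fin.sum_univ_two, sq] using this
    have e01 : R 0 0 * R 0 1 + R 1 0 * R 1 1 = 0 := by
      have := congrFun (congrFun hR 0) 1
      simpa [Matrix.mul_apply, Fin.sum_univ_two] using this
    set u0 : ℝ := R 0 0 * p 0 + R 0 1 * p 1 with hu0
    set u1 : ℝ := R 1 0 * p 0 + R 1 1 * p 1 with hu1
    set v0 : ℝ := R 0 0 * y 0 + R 0 1 * y 1 with hv0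
    set v1 : ℝ := R 1 0 * y 0 + R 1 1 * y 1 with hv1
    have huv : u0 * v0 + u1 * v1 = p 0 * y 0 + p 1 * y 1 := by
      rw [hu0, hu1, hv0, hv1]
      linear_combination (p 0 * y 0) * e00 + (p 1 * y 1) * e11 + (p 0 * y 1 + p 1 * y 0) * e01
    have hu : u0^2 + u1^2 = p 0 ^2 + p 1 ^2 := by
      rw [hu0, hu1]
      linear_combination (p 0 ^2) * e00 + (p 1 ^2) * e11 + (2 * p 0 * p 1) * e01
    have hv : v0^2 + v1^2 = y 0 ^2 + y 1 ^2 := by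
      rw [hv0, hv1]
      linear_combination (y 0 ^2) * e00 + (y 1 ^2) * e11 + (2 * y 0 * y 1) * e01
    have hFR : F R = (l1+l2)/2 * (y 0 * p 0 + y 1 * p 1) + (l1-l2)/2 * (u0 * v0 - u1 * v1) := by
      rw [hFval R, hu0, hu1, hv0, hv1]
      rw [hu0, hu1, hv0, hv1] at huv
      linear_combination ((l1+l2)/2) * huv
    clear_value u0 u1 v0 v1
    set s : ℝ := u0 * v0 - u1 * v1 with hsdef
    clear_value s
    have hAB : A ^ 2 + B ^ 2 = (p 0 ^2 + p 1 ^2) * (y 0 ^2 + y 1 ^2) := by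
      rw [hAdef, hBdef]; ring
    have hs2 : s^2 ≤ A^2 + B^2 := by
      rw [hAB, ← hu, ← hv, hsdef]
      nlinarith [sq_nonneg (u0 * v1 + u1 * v0)]
    obtain ⟨K, hKdef⟩ : ∃ K : ℝ, K = |l1 - l2| / 2 * (euclidNorm2 y * euclidNorm2 p) := ⟨_, rfl⟩
    rw [← hKdef]
    have hKval : K = |(l1-l2)/2| * Real.sqrt (A^2+B^2) := by
      rw [hKdef, hr, abs_div]
      norm_num
    have hKnn : 0 ≤ K := by rw [hKval]; positivity
    have habs : |(l1-l2)/2 * s| ≤ K := by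
      rw [hKval, abs_mul]
      apply mul_le_mul_of_nonneg_left _ (abs_nonneg _)
      rw [← Real.sqrt_sq_eq_abs]
      exact Real.sqrt_le_sqrt hs2
    by_cases hK0 : K = 0
    · refine ⟨0, by norm_num, ?_⟩
      have hs0 : (l1-l2)/2 * s = 0 := by
        rw [hK0] at habs
        exact abs_eq_zero.mp (le_antisymm habs (abs_nonneg _))
      rw [hFR, hyp, hs0]
      ring
    · have hKpos : 0 < K := lt_of_le_of_ne hKnn (Ne.symm hK0)
      have hab2 := abs_le.mp habs
      refine ⟨(l1-l2)/2 * s / K, ?_, ?_⟩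
      · rw [Set.mem_Icc]
        constructor
        · rw [le_div_iff₀ hKpos]; linarith [hab2.1]
        · rw [div_le_one hKpos]; linarith [hab2.2]
      · rw [hFR, hyp]
        field_simp
  -- Backward: interval ⊆ SO(2) image
  have hIS : {z : ℝ | ∃ t ∈ Set.Icc (-1 : ℝ) 1,
        z = (l1 + l2) / 2 * (y ⬝ᵥ p) + t * (|l1 - l2| / 2 * (euclidNorm2 y * euclidNorm2 p))} ⊆
      F '' {R | Rᵀ * R = 1 ∧ R.det = 1} := by
    rintro z ⟨t, ht, rfl⟩
    rw [Set.mem_Icc] at ht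
    by_cases hdeg : (l1 - l2) * Real.sqrt (A^2+B^2) = 0
    · -- degenerate: use identity
      refine ⟨1, ⟨by simp, by simp⟩, ?_⟩
      have h1 : F 1 = l1 * (p 0 * y 0) + l2 * (p 1 * y 1) := by
        rw [hFval 1]
        norm_num [Matrix.one_apply]
      have hz : t * (|l1 - l2| / 2 * (euclidNorm2 y * euclidNorm2 p)) = 0 := by
        rw [hr]
        rcases mul_eq_zero.mp hdeg with h | h
        · rw [show l1 - l2 = 0 from h]; simp
        · rw [h]; ring
      rw [h1, hz, hyp]
      rcases mul_eq_zero.mp hdeg with h | h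
      · have hl : l1 = l2 := by linarith
        rw [hl]; ring
      · have hAB0 : A^2 + B^2 = 0 := by nlinarith [hsqrtsq, h]
        have hA0 : A = 0 := by nlinarith [sq_nonneg A, sq_nonneg B]
        have hA0' : p 0 * y 0 - p 1 * y 1 = 0 := hAdef.symm.trans hA0
        linear_combination ((l1-l2)/2) * hA0'
    · have hd : l1 - l2 ≠ 0 := fun h => hdeg (by rw [h]; ring)
      have hrpos : 0 < Real.sqrt (A^2+B^2) := by
        rcases lt_or_eq_of_le hsqrtnn with h | h
        · exact h
        · exact absurd (by rw [← h]; ring) hdeg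
      have hABpos : 0 < A^2 + B^2 := by nlinarith [hsqrtsq]
      obtain ⟨d, hddef⟩ : ∃ d : ℝ, d = (l1 - l2)/2 := ⟨_, rfl⟩
      have hdne : d ≠ 0 := by rw [hddef]; intro h; exact hd (by linarith)
      obtain ⟨s0, hs0def⟩ : ∃ s0 : ℝ, s0 = t * |d| * Real.sqrt (A^2+B^2) / d := ⟨_, rfl⟩
      have hs0sq : s0^2 ≤ A^2 + B^2 := by
        rw [hs0def, div_pow, mul_pow, mul_pow, sq_abs, hsqrtsq, div_le_iff₀ (by positivity)]
        have ht2 : t^2 ≤ 1 := by nlinarith [ht.1, ht.2]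
        nlinarith [mul_le_mul_of_nonneg_right ht2 (mul_nonneg (sq_nonneg d) hABpos.le)]
      have hu2 : Real.sqrt (A^2 + B^2 - s0^2) ^2 = A^2 + B^2 - s0^2 :=
        Real.sq_sqrt (by linarith)
      obtain ⟨u, hudef⟩ : ∃ u : ℝ, u = Real.sqrt (A^2 + B^2 - s0^2) := ⟨_, rfl⟩
      rw [← hudef] at hu2
      obtain ⟨a, hadef⟩ : ∃ a : ℝ, a = (s0 * A - u * B) / (A^2 + B^2) := ⟨_, rfl⟩
      obtain ⟨b, hbdef⟩ : ∃ b : ℝ, b = (s0 * B + u * A) / (A^2 + B^2) := ⟨_, rfl⟩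
      have hab : a^2 + b^2 = 1 := by
        rw [hadef, hbdef]
        field_simp
        nlinarith [hu2]
      have haAbB : a * A + b * B = s0 := by
        rw [hadef, hbdef]
        field_simp
        ring
      obtain ⟨x, w, hxw1, hxw2, hxw3⟩ := exists_xw a b hab
      refine ⟨!![x, -w; w, x], ⟨?_, ?_⟩, ?_⟩
      · have htr : (!![x, -w; w, x])ᵀ = !![x, w; -w, x] := by
          ext i j; fin_cases i <;> fin_cases j <;> simp
        rw [htr, Matrix.mul_fin_two, Matrix.one_fin_two]
        ext i j; fin_cases i <;> fin_cases j <;> simp <;> nlinarith [hxw1]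
      · rw [Matrix.det_fin_two_of]
        nlinarith [hxw1]
      · have hFR : F !![x, -w; w, x] =
            (l1+l2)/2 * (y 0 * p 0 + y 1 * p 1) + d * ((x^2 - w^2) * A + (-(2*x*w)) * B) := by
          have E00 : (!![x, -w; w, x] : Matrix (Fin 2) (Fin 2) ℝ) 0 0 = x := by simp
          have E01 : (!![x, -w; w, x] : Matrix (Fin 2) (Fin 2) ℝ) 0 1 = -w := by simp
          have E10 : (!![x, -w; w, x] : Matrix (Fin 2) (Fin 2) ℝ) 1 0 = w := by simp
          have E11 : (!![x, -w; w, x] : Matrix (Fin 2) (Fin 2) ℝ) 1 1 = x := by simp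
          rw [hFval, E00, E01, E10, E11, hddef, hAdef, hBdef]
          linear_combination ((l1+l2)/2 * (p 0 * y 0 + p 1 * y 1)) * hxw1
        rw [hFR, hxw2, hxw3, haAbB, hyp, hs0def, hr]
        have habsd : |l1 - l2| / 2 = |d| := by
          rw [hddef, abs_div]; norm_num
        rw [habsd]
        field_simp
  have hsub : F '' {R | Rᵀ * R = 1 ∧ R.det = 1} ⊆ F '' {R | Rᵀ * R = 1} :=
    Set.image_mono (fun R hR => hR.1)
  exact ⟨le_antisymm (le_trans hOI hIS) hsub, le_antisymm hOI (le_trans hIS hsub)⟩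
end

section
/- Let y, p ∈ ℝ² and a, b > 0 be given. For R ∈ ℝ^{2×2} and λ > 0 define G(R, λ) := pᵀ Rᵀ diag((λ+1)/(aλ+b), (λ+1)/(a+bλ)) R y. Then the closure of the set { G(R, λ) : R ∈ O(2), λ > 0 } equals the closed interval { (1/2)(1/a + 1/b)·(yᵀp) + t·(1/2)(1/a − 1/b)·‖y‖₂·‖p‖₂ : t ∈ [−1, 1] }. -/
open Matrix Filter

private lemma expand2 (p y : Fin 2 → ℝ) (R : Matrix (Fin 2) (Fin 2) ℝ) (m1 m2 : ℝ) :
    p ⬝ᵥ (Rᵀ * Matrix.diagonal ![m1, m2] * R) *ᵥ y =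
      m1 * ((R 0 0 * p 0 + R 0 1 * p 1) * (R 0 0 * y 0 + R 0 1 * y 1)) +
      m2 * ((R 1 0 * p 0 + R 1 1 * p 1) * (R 1 0 * y 0 + R 1 1 * y 1)) := by
  simp [dotProduct, mulVec, Matrix.mul_apply, Fin.sum_univ_two, Matrix.diagonal]
  ring

private lemma trig2 (A B ρ t : ℝ) (ht : t ∈ Set.Icc (-1:ℝ) 1) (hAB : A^2 + B^2 = ρ^2)
    (hρ : 0 ≤ ρ) : ∃ x : ℝ, A * Real.cos x + B * Real.sin x = t * ρ := by
  rcases eq_or_lt_of_le hρ with h | h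
  · have hA : A = 0 := by nlinarith [sq_nonneg A, sq_nonneg B]
    have hB : B = 0 := by nlinarith [sq_nonneg A, sq_nonneg B]
    exact ⟨0, by simp [hA, hB, ← h]⟩
  · set z : ℂ := ⟨A, B⟩ with hz
    have habs : ‖z‖ = ρ := by
      rw [Complex.norm_def, Complex.normSq_apply]
      simp only [hz]
      rw [show A * A + B * B = ρ^2 by nlinarith]
      exact Real.sqrt_sq hρ
    have hz0 : z ≠ 0 := by
      intro h0; rw [h0] at habs; simp at habs; exact absurd habs.symm (ne_of_gt h)
    have hc : Real.cos (Complex.arg z) = A / ρ := by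
      rw [← habs]; exact Complex.cos_arg hz0
    have hs : Real.sin (Complex.arg z) = B / ρ := by
      rw [← habs]; exact Complex.sin_arg z
    refine ⟨Complex.arg z + Real.arccos t, ?_⟩
    rw [Real.cos_add, Real.sin_add, Real.cos_arccos ht.1 ht.2]
    field_simp at hc hs
    linear_combination -(Real.cos z.arg * t - Real.sin (Real.arccos t) * Real.sin z.arg) * hc
      - (Real.sin z.arg * t + Real.cos z.arg * Real.sin (Real.arccos t)) * hs
      + ρ * t * (Real.sin_sq_add_cos_sq z.arg)

private lemma tendsto_mu (a b : ℝ) (ha : 0 < a) :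
    Tendsto (fun l : ℝ => (l + 1) / (a * l + b)) atTop (nhds (1 / a)) := by
  have h0 : Tendsto (fun l : ℝ => l⁻¹) atTop (nhds 0) := tendsto_inv_atTop_zero
  have hcont : ContinuousAt (fun x : ℝ => (1 + x) / (a + b * x)) 0 := by
    apply ContinuousAt.div
    · fun_prop
    · fun_prop
    · simp [ha.ne']
  have h1 : Tendsto (fun l : ℝ => (1 + l⁻¹) / (a + b * l⁻¹)) atTop (nhds (1 / a)) := by
    have := hcont.tendsto.comp h0
    simpa [Function.comp_def] using this
  apply h1.congr'
  filter_upwards [eventually_gt_atTop 0] with l hl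
  have hl' : l ≠ 0 := hl.ne'
  field_simp

private lemma cs2 (P1 P2 Y1 Y2 np ny : ℝ) (hnp : 0 ≤ np) (hny : 0 ≤ ny)
    (hP : P1^2 + P2^2 = np^2) (hY : Y1^2 + Y2^2 = ny^2) :
    |P1 * Y1| + |P2 * Y2| ≤ np * ny := by
  have h1 : (|P1 * Y1| + |P2 * Y2|)^2 ≤ (np * ny)^2 := by
    rw [abs_mul, abs_mul]
    nlinarith [sq_nonneg (|P1| * |Y2| - |P2| * |Y1|), sq_abs P1, sq_abs P2, sq_abs Y1,
      sq_abs Y2, abs_nonneg P1, abs_nonneg P2, abs_nonneg Y1, abs_nonneg Y2,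
      mul_nonneg (abs_nonneg P1) (abs_nonneg Y1), mul_nonneg (abs_nonneg P2) (abs_nonneg Y2)]
  have h2 : 0 ≤ |P1 * Y1| + |P2 * Y2| := by positivity
  nlinarith [mul_nonneg hnp hny]

private lemma mu_range (a b l : ℝ) (ha : 0 < a) (hb : 0 < b) (hl : 0 < l) :
    ((l + 1) / (a * l + b) - 1/2 * (1/a + 1/b))^2 ≤ (1/2 * (1/a - 1/b))^2 := by
  have hd : 0 < a * l + b := by positivity
  have key : ((l + 1) / (a * l + b) - 1/a) * ((l + 1) / (a * l + b) - 1/b) ≤ 0 := by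
    have e1 : (l + 1) / (a * l + b) - 1/a = (a - b) / (a * (a * l + b)) := by
      field_simp; ring
    have e2 : (l + 1) / (a * l + b) - 1/b = (l * (b - a)) / (b * (a * l + b)) := by
      field_simp; ring
    rw [e1, e2, div_mul_div_comm]
    apply div_nonpos_of_nonpos_of_nonneg
    · nlinarith [sq_nonneg (a - b)]
    · positivity
  nlinarith [key]

private lemma mu_range' (a b l : ℝ) (ha : 0 < a) (hb : 0 < b) (hl : 0 < l) :
    ((l + 1) / (a + b * l) - 1/2 * (1/a + 1/b))^2 ≤ (1/2 * (1/a - 1/b))^2 := by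
  have h := mu_range b a l hb ha hl
  calc ((l + 1) / (a + b * l) - 1/2 * (1/a + 1/b))^2
      = ((l + 1) / (b * l + a) - 1/2 * (1/b + 1/a))^2 := by rw [add_comm a (b*l), add_comm (1/a) (1/b)]
    _ ≤ (1/2 * (1/b - 1/a))^2 := h
    _ = (1/2 * (1/a - 1/b))^2 := by ring

private lemma mem_interval (z c r : ℝ) (h : |z - c| ≤ |r|) :
    ∃ t ∈ Set.Icc (-1:ℝ) 1, z = c + t * r := by
  rcases eq_or_ne r 0 with hr | hr
  · refine ⟨0, by norm_num, ?_⟩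
    have : z - c = 0 := by
      rw [hr] at h; simpa [abs_nonpos_iff] using h
    linarith
  · refine ⟨(z - c) / r, ?_, by field_simp; ring⟩
    have hr' : 0 < |r| := abs_pos.mpr hr
    have : |(z - c) / r| ≤ 1 := by
      rw [abs_div, div_le_one hr']
      exact h
    exact abs_le.mp this

/-- For `G(R,λ) := pᵀ Rᵀ diag((λ+1)/(aλ+b), (λ+1)/(a+bλ)) R y`, the closure of the range of `G`
over `R ∈ O(2)`, `λ > 0` equals the interval
`(1/2)(1/a + 1/b)(yᵀp) + [-1,1]·(1/2)(1/a − 1/b)‖y‖₂‖p‖₂`. -/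
theorem stmt_8 (y p : Fin 2 → ℝ) (a b : ℝ) (ha : 0 < a) (hb : 0 < b)
    (G : Matrix (Fin 2) (Fin 2) ℝ → ℝ → ℝ)
    (hG : ∀ R l, G R l =
      p ⬝ᵥ (Rᵀ * Matrix.diagonal ![(l + 1) / (a * l + b), (l + 1) / (a + b * l)] * R) *ᵥ y) :
    closure {z : ℝ | ∃ R : Matrix (Fin 2) (Fin 2) ℝ, Rᵀ * R = 1 ∧ ∃ l : ℝ, 0 < l ∧ z = G R l} =
      {z : ℝ | ∃ t ∈ Set.Icc (-1 : ℝ) 1,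
        z = 1 / 2 * (1 / a + 1 / b) * (y ⬝ᵥ p) +
          t * (1 / 2 * (1 / a - 1 / b) * (euclidNorm2 y * euclidNorm2 p))} := by
  apply Set.Subset.antisymm
  · apply closure_minimal
    · have hnp2 : euclidNorm2 p ^ 2 = p 0 ^ 2 + p 1 ^ 2 := by
        rw [euclidNorm2]; exact Real.sq_sqrt (by positivity)
      have hny2 : euclidNorm2 y ^ 2 = y 0 ^ 2 + y 1 ^ 2 := by
        rw [euclidNorm2]; exact Real.sq_sqrt (by positivity)
      have hnp0 : 0 ≤ euclidNorm2 p := Real.sqrt_nonneg _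
      have hny0 : 0 ≤ euclidNorm2 y := Real.sqrt_nonneg _
      rintro z ⟨R, hR, l, hl, rfl⟩
      have hc1 := congrFun (congrFun hR 0) 0
      have hc2 := congrFun (congrFun hR 1) 1
      have hc3 := congrFun (congrFun hR 0) 1
      simp only [Matrix.mul_apply, Fin.sum_univ_two, Matrix.one_apply, Matrix.transpose_apply,
        if_pos rfl] at hc1 hc2 hc3
      norm_num at hc1 hc2 hc3
      rw [Set.mem_setOf_eq, hG, expand2]
      set np := euclidNorm2 p
      set ny := euclidNorm2 y
      set m1 := (l + 1) / (a * l + b) with hm1def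
      set m2 := (l + 1) / (a + b * l) with hm2def
      set P1 := R 0 0 * p 0 + R 0 1 * p 1 with hP1
      set P2 := R 1 0 * p 0 + R 1 1 * p 1 with hP2
      set Y1 := R 0 0 * y 0 + R 0 1 * y 1 with hY1
      set Y2 := R 1 0 * y 0 + R 1 1 * y 1 with hY2
      have hPs : P1 ^ 2 + P2 ^ 2 = np ^ 2 := by
        rw [hnp2, hP1, hP2]
        linear_combination p 0 ^ 2 * hc1 + p 1 ^ 2 * hc2 + 2 * (p 0) * (p 1) * hc3
      have hYs : Y1 ^ 2 + Y2 ^ 2 = ny ^ 2 := by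
        rw [hny2, hY1, hY2]
        linear_combination y 0 ^ 2 * hc1 + y 1 ^ 2 * hc2 + 2 * (y 0) * (y 1) * hc3
      have hsum : P1 * Y1 + P2 * Y2 = y ⬝ᵥ p := by
        simp only [dotProduct, Fin.sum_univ_two, hP1, hP2, hY1, hY2]
        linear_combination (y 0 * p 0) * hc1 + (y 1 * p 1) * hc2 + (p 0 * y 1 + p 1 * y 0) * hc3
      have habs1 : |m1 - 1/2 * (1/a + 1/b)| ≤ |1/2 * (1/a - 1/b)| :=
        abs_le_of_sq_le_sq (by rw [sq_abs]; exact mu_range a b l ha hb hl) (abs_nonneg _)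
      have habs2 : |m2 - 1/2 * (1/a + 1/b)| ≤ |1/2 * (1/a - 1/b)| :=
        abs_le_of_sq_le_sq (by rw [sq_abs]; exact mu_range' a b l ha hb hl) (abs_nonneg _)
      have hcs := cs2 P1 P2 Y1 Y2 np ny hnp0 hny0 hPs hYs
      apply mem_interval
      have e : m1 * (P1 * Y1) + m2 * (P2 * Y2) - 1 / 2 * (1 / a + 1 / b) * (y ⬝ᵥ p)
          = (m1 - 1/2 * (1/a + 1/b)) * (P1 * Y1) + (m2 - 1/2 * (1/a + 1/b)) * (P2 * Y2) := by
        linear_combination (1/2 * (1/a + 1/b)) * hsum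
      rw [e]
      calc |(m1 - 1/2 * (1/a + 1/b)) * (P1 * Y1) + (m2 - 1/2 * (1/a + 1/b)) * (P2 * Y2)|
          ≤ |(m1 - 1/2 * (1/a + 1/b)) * (P1 * Y1)| + |(m2 - 1/2 * (1/a + 1/b)) * (P2 * Y2)| :=
            abs_add_le _ _
        _ = |m1 - 1/2 * (1/a + 1/b)| * |P1 * Y1| + |m2 - 1/2 * (1/a + 1/b)| * |P2 * Y2| := by
            rw [abs_mul (m1 - 1/2 * (1/a + 1/b)) (P1 * Y1), abs_mul (m2 - 1/2 * (1/a + 1/b)) (P2 * Y2)]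
        _ ≤ |1/2 * (1/a - 1/b)| * |P1 * Y1| + |1/2 * (1/a - 1/b)| * |P2 * Y2| := by
            gcongr
        _ = |1/2 * (1/a - 1/b)| * (|P1 * Y1| + |P2 * Y2|) := by ring
        _ ≤ |1/2 * (1/a - 1/b)| * (np * ny) := by gcongr
        _ = |1 / 2 * (1 / a - 1 / b) * (ny * np)| := by
            rw [abs_mul (1/2 * (1/a - 1/b)), abs_of_nonneg (mul_nonneg hny0 hnp0)]; ring
    · -- the interval is closed
      have himg : {z : ℝ | ∃ t ∈ Set.Icc (-1 : ℝ) 1,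
          z = 1 / 2 * (1 / a + 1 / b) * (y ⬝ᵥ p) +
            t * (1 / 2 * (1 / a - 1 / b) * (euclidNorm2 y * euclidNorm2 p))} =
          (fun t : ℝ => 1 / 2 * (1 / a + 1 / b) * (y ⬝ᵥ p) +
            t * (1 / 2 * (1 / a - 1 / b) * (euclidNorm2 y * euclidNorm2 p))) '' Set.Icc (-1) 1 := by
        ext w
        simp only [Set.mem_setOf_eq, Set.mem_image]
        exact exists_congr fun t => and_congr_right fun _ => eq_comm
      rw [himg]
      exact (isCompact_Icc.image (by continuity)).isClosed
  · have hnp2 : euclidNorm2 p ^ 2 = p 0 ^ 2 + p 1 ^ 2 := by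
      rw [euclidNorm2]; exact Real.sq_sqrt (by positivity)
    have hny2 : euclidNorm2 y ^ 2 = y 0 ^ 2 + y 1 ^ 2 := by
      rw [euclidNorm2]; exact Real.sq_sqrt (by positivity)
    have hnp0 : 0 ≤ euclidNorm2 p := Real.sqrt_nonneg _
    have hny0 : 0 ≤ euclidNorm2 y := Real.sqrt_nonneg _
    set np := euclidNorm2 p
    set ny := euclidNorm2 y
    rintro z ⟨t, ht, rfl⟩
    -- choose the angle
    have hAB : (p 0 * y 0 - p 1 * y 1)^2 + (p 0 * y 1 + p 1 * y 0)^2 = (ny * np)^2 := by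
      linear_combination (-(p 0 ^ 2) - p 1 ^ 2) * hny2 - ny ^ 2 * hnp2
    obtain ⟨x, hx⟩ := trig2 (p 0 * y 0 - p 1 * y 1) (p 0 * y 1 + p 1 * y 0) (ny * np) t ht hAB
      (mul_nonneg hny0 hnp0)
    set cθ := Real.cos (x / 2) with hcθ
    set sθ := Real.sin (x / 2) with hsθ
    have hpyth : sθ ^ 2 + cθ ^ 2 = 1 := Real.sin_sq_add_cos_sq _
    have hcx : Real.cos x = cθ ^ 2 - sθ ^ 2 := by
      rw [show x = 2 * (x / 2) by ring, Real.cos_two_mul']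
    have hsx : Real.sin x = 2 * sθ * cθ := by
      rw [show x = 2 * (x / 2) by ring, Real.sin_two_mul]
    set R : Matrix (Fin 2) (Fin 2) ℝ := !![cθ, sθ; -sθ, cθ] with hRdef
    have hT : Rᵀ = !![cθ, -sθ; sθ, cθ] := by
      ext i j
      fin_cases i <;> fin_cases j <;> simp [hRdef]
    have hRo : Rᵀ * R = 1 := by
      rw [hT, hRdef, Matrix.mul_fin_two, Matrix.one_fin_two]
      ext i j
      fin_cases i <;> fin_cases j <;> simp <;>
        first
          | linear_combination hpyth
          | ring
    set α := (cθ * p 0 + sθ * p 1) * (cθ * y 0 + sθ * y 1) with hα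
    set β := (-sθ * p 0 + cθ * p 1) * (-sθ * y 0 + cθ * y 1) with hβ
    have hGRl : ∀ l : ℝ, G R l = (l + 1) / (a * l + b) * α + (l + 1) / (a + b * l) * β := by
      intro l
      rw [hG, expand2]
      simp [hRdef, hα, hβ]
    have hsum : α + β = y ⬝ᵥ p := by
      simp only [dotProduct, Fin.sum_univ_two, hα, hβ]
      linear_combination (p 0 * y 0 + p 1 * y 1) * hpyth
    have hdiff : α - β = t * (ny * np) := by
      rw [← hx, hcx, hsx, hα, hβ]; ring
    have hval : 1 / 2 * (1 / a + 1 / b) * (y ⬝ᵥ p) + t * (1 / 2 * (1 / a - 1 / b) * (ny * np))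
        = 1 / a * α + 1 / b * β := by
      linear_combination (-(1/2) * (1/a + 1/b)) * hsum + (-(1/2) * (1/a - 1/b)) * hdiff
    rw [hval]
    have htend2 : Tendsto (fun l : ℝ => (l + 1) / (a + b * l)) atTop (nhds (1 / b)) := by
      have h2 := tendsto_mu b a hb
      rwa [show (fun l : ℝ => (l + 1) / (b * l + a)) = (fun l : ℝ => (l + 1) / (a + b * l)) from
        funext fun l => by rw [add_comm a (b * l)]] at h2
    have htend : Tendsto (fun l : ℝ => G R l) atTop (nhds (1 / a * α + 1 / b * β)) := by
      have := (((tendsto_mu a b ha).mul_const α).add (htend2.mul_const β))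
      exact this.congr fun l => (hGRl l).symm
    apply mem_closure_of_tendsto htend
    filter_upwards [eventually_gt_atTop 0] with l hl
    exact ⟨R, hRo, l, hl, rfl⟩
end

section
/- Let y, p ∈ ℝ² and a, b > 0 be given. Then the closure of the set { −(b−a)·a·pᵀ Rᵀ diag((λ+1)/(aλ+b), (λ+1)/(a+bλ)) R y : R ∈ O(2), λ > 0 } equals the closed interval { −(b−a)·(yᵀp) + ((b−a)²/(2b))·( yᵀp + t·‖y‖₂·‖p‖₂ ) : t ∈ [−1, 1] }. -/
open Matrix

theorem orth_facts (p y : Fin 2 → ℝ) (R : Matrix (Fin 2) (Fin 2) ℝ) (hR : Rᵀ * R = 1) :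
    (R *ᵥ p) 0 * (R *ᵥ y) 0 + (R *ᵥ p) 1 * (R *ᵥ y) 1 = p 0 * y 0 + p 1 * y 1 ∧
    ((R *ᵥ p) 0 * (R *ᵥ y) 0 - (R *ᵥ p) 1 * (R *ᵥ y) 1)^2
      ≤ (y 0 ^2 + y 1 ^2) * (p 0 ^2 + p 1 ^2) := by
  have h00 := congrFun (congrFun hR 0) 0
  have h01 := congrFun (congrFun hR 0) 1
  have h11 := congrFun (congrFun hR 1) 1
  simp [Matrix.mul_apply, Fin.sum_univ_two, Matrix.one_apply] at h00 h01 h11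
  simp only [Matrix.mulVec, dotProduct, Fin.sum_univ_two]
  have hq : (R 0 0 * p 0 + R 0 1 * p 1)^2 + (R 1 0 * p 0 + R 1 1 * p 1)^2 = p 0 ^2 + p 1 ^2 := by
    linear_combination (p 0 ^2) * h00 + (2 * p 0 * p 1) * h01 + (p 1 ^2) * h11
  have hu : (R 0 0 * y 0 + R 0 1 * y 1)^2 + (R 1 0 * y 0 + R 1 1 * y 1)^2 = y 0 ^2 + y 1 ^2 := by
    linear_combination (y 0 ^2) * h00 + (2 * y 0 * y 1) * h01 + (y 1 ^2) * h11
  constructor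
  · linear_combination (p 0 * y 0) * h00 + (p 0 * y 1 + p 1 * y 0) * h01 + (p 1 * y 1) * h11
  · nlinarith [sq_nonneg ((R 0 0 * p 0 + R 0 1 * p 1) * (R 1 0 * y 0 + R 1 1 * y 1)
      + (R 1 0 * p 0 + R 1 1 * p 1) * (R 0 0 * y 0 + R 0 1 * y 1)), hq, hu,
      sq_nonneg (R 0 0 * p 0 + R 0 1 * p 1), sq_nonneg (R 1 0 * y 0 + R 1 1 * y 1)]

theorem rot_orth (θ : ℝ) :
    (!![Real.cos θ, -Real.sin θ; Real.sin θ, Real.cos θ])ᵀ *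
      !![Real.cos θ, -Real.sin θ; Real.sin θ, Real.cos θ] = 1 := by
  have pyth := Real.sin_sq_add_cos_sq θ
  have ht : (!![Real.cos θ, -Real.sin θ; Real.sin θ, Real.cos θ])ᵀ
      = !![Real.cos θ, Real.sin θ; -Real.sin θ, Real.cos θ] := by
    ext i j; fin_cases i <;> fin_cases j <;> simp
  rw [ht, Matrix.mul_fin_two, Matrix.one_fin_two]
  ext i j; fin_cases i <;> fin_cases j <;> simp <;> nlinarith

theorem rot_mulVec (θ : ℝ) (p : Fin 2 → ℝ) :
    (!![Real.cos θ, -Real.sin θ; Real.sin θ, Real.cos θ] *ᵥ p) 0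
      = p 0 * Real.cos θ - p 1 * Real.sin θ := by
  simp [Matrix.mulVec, dotProduct, Fin.sum_univ_two]; ring

theorem exists_phi (α β : ℝ) (hz : α^2 + β^2 ≠ 0) :
    ∃ φ A : ℝ, 0 < A ∧ A^2 = α^2 + β^2 ∧ Real.cos φ = α / A ∧ Real.sin φ = -β / A := by
  set z : ℂ := ⟨α, -β⟩ with hzdef
  have hzne : z ≠ 0 := by
    intro hzz
    apply hz
    have h1 : α = 0 := congrArg Complex.re hzz
    have h2 : -β = 0 := congrArg Complex.im hzz
    rw [h1]; nlinarith
  refine ⟨z.arg, Real.sqrt (α^2 + β^2), ?_, ?_, ?_, ?_⟩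
  · exact Real.sqrt_pos.mpr (lt_of_le_of_ne (by positivity) (Ne.symm hz))
  · exact Real.sq_sqrt (by positivity)
  · rw [Complex.cos_arg hzne]
    congr 1
    rw [Complex.norm_def, Complex.normSq_apply]
    norm_num [hzdef]
    ring_nf
  · rw [Complex.sin_arg]
    congr 1
    rw [Complex.norm_def, Complex.normSq_apply]
    norm_num [hzdef]
    ring_nf

theorem realize (p y : Fin 2 → ℝ) (v : ℝ)
    (hv : (2 * v - (p 0 * y 0 + p 1 * y 1))^2 ≤ (y 0 ^2 + y 1 ^2) * (p 0 ^2 + p 1 ^2)) :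
    ∃ R : Matrix (Fin 2) (Fin 2) ℝ, Rᵀ * R = 1 ∧ (R *ᵥ p) 0 * (R *ᵥ y) 0 = v := by
  obtain ⟨c, hc⟩ : ∃ x : ℝ, x = p 0 * y 0 + p 1 * y 1 := ⟨_, rfl⟩
  obtain ⟨N, hN⟩ : ∃ x : ℝ, x = (y 0 ^2 + y 1 ^2) * (p 0 ^2 + p 1 ^2) := ⟨_, rfl⟩
  obtain ⟨α, hα⟩ : ∃ x : ℝ, x = y 0 * p 0 - y 1 * p 1 := ⟨_, rfl⟩
  obtain ⟨β, hβ⟩ : ∃ x : ℝ, x = y 0 * p 1 + y 1 * p 0 := ⟨_, rfl⟩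
  rw [← hc, ← hN] at hv
  obtain ⟨h, hh⟩ : ∃ f : ℝ → ℝ, f = fun θ =>
    (p 0 * Real.cos θ - p 1 * Real.sin θ) * (y 0 * Real.cos θ - y 1 * Real.sin θ) := ⟨_, rfl⟩
  have hexp : ∀ θ, h θ = c / 2 + (α * Real.cos (2*θ) - β * Real.sin (2*θ)) / 2 := by
    intro θ
    have pyth := Real.sin_sq_add_cos_sq θ
    rw [hh, Real.cos_two_mul, Real.sin_two_mul, hc, hα, hβ]
    linear_combination (p 1 * y 1) * pyth
  have hA2 : α^2 + β^2 = N := by rw [hα, hβ, hN]; ring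
  have key : ∃ θ : ℝ, h θ = v := by
    by_cases hz : α^2 + β^2 = 0
    · have ha0 : α = 0 := by nlinarith [sq_nonneg α, sq_nonneg β]
      have hb0 : β = 0 := by nlinarith [sq_nonneg α, sq_nonneg β]
      have hN0 : N = 0 := by rw [← hA2, hz]
      have hcv : 2 * v - c = 0 := by nlinarith [sq_nonneg (2*v - c)]
      refine ⟨0, ?_⟩
      rw [hexp 0]
      simp [ha0, hb0]
      linarith
    · obtain ⟨φ, A, hApos, hAsq, hcos, hsin⟩ := exists_phi α β hz
      have hdiv : A^2 / A = A := by rw [sq, mul_div_assoc, div_self hApos.ne', mul_one]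
      have e1 : α * (α / A) - β * (-β / A) = A := by
        have : α * (α / A) - β * (-β / A) = (α^2 + β^2) / A := by ring
        rw [this, ← hAsq, hdiv]
      have e2 : α * -(α / A) - β * -(-β / A) = -A := by
        have : α * -(α / A) - β * -(-β / A) = -((α^2 + β^2) / A) := by ring
        rw [this, ← hAsq, hdiv]
      have hval1 : h (φ / 2) = c / 2 + A / 2 := by
        rw [hexp, show 2 * (φ/2) = φ by ring, hcos, hsin, e1]
      have hval2 : h ((φ + Real.pi) / 2) = c / 2 + -A / 2 := by
        rw [hexp, show 2 * ((φ + Real.pi)/2) = φ + Real.pi by ring,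
          Real.cos_add_pi, Real.sin_add_pi, hcos, hsin, e2]
      have hcont : ContinuousOn h (Set.Icc (φ/2) ((φ + Real.pi)/2)) := by
        rw [hh]; apply Continuous.continuousOn; fun_prop
      have hle : φ/2 ≤ (φ + Real.pi)/2 := by
        have := Real.pi_pos; linarith
      have hmem : v ∈ Set.Icc (h ((φ + Real.pi)/2)) (h (φ/2)) := by
        rw [hval1, hval2]
        have habs2 : (2*v - c)^2 ≤ A^2 := by rw [hAsq, hA2]; exact hv
        have h1 : -A ≤ 2*v - c := by nlinarith
        have h2 : 2*v - c ≤ A := by nlinarith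
        exact ⟨by linarith, by linarith⟩
      obtain ⟨θ, _, hθ⟩ := intermediate_value_Icc' hle hcont hmem
      exact ⟨θ, hθ⟩
  obtain ⟨θ, hθ⟩ := key
  refine ⟨!![Real.cos θ, -Real.sin θ; Real.sin θ, Real.cos θ], rot_orth θ, ?_⟩
  rw [rot_mulVec θ p, rot_mulVec θ y, ← hθ, hh]
set_option maxHeartbeats 1000000 in

theorem key_ineq (a b l s c B : ℝ) (ha : 0 < a) (hb : 0 < b) (hl : 0 < l)
    (hB : 0 ≤ B) (hc : c^2 ≤ B^2) (hs : (2*s - c)^2 ≤ B^2) :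
    |(-(b-a) * a * ((l+1)/(a*l+b) * s + (l+1)/(a+b*l) * (c - s))) -
      (-(b-a)*(a+b)*c/(2*b))| ≤ (b-a)^2 * B / (2*b) := by
  have hD1 : (0:ℝ) < a*l+b := by positivity
  have hD2 : (0:ℝ) < a+b*l := by positivity
  have hcB : |c| ≤ B := by rw [abs_le]; constructor <;> nlinarith
  have hsB : |2*s - c| ≤ B := by rw [abs_le]; constructor <;> nlinarith
  have heq : (-(b-a) * a * ((l+1)/(a*l+b) * s + (l+1)/(a+b*l) * (c - s))) -
      (-(b-a)*(a+b)*c/(2*b))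
      = (b-a)^2/(2*b*((a*l+b)*(a+b*l))) * ((b-a)*(a+b)*(c*l) - a*b*(l^2-1)*(2*s-c)) := by
    field_simp
    ring
  rw [heq, abs_mul, abs_of_nonneg (show (0:ℝ) ≤ (b-a)^2/(2*b*((a*l+b)*(a+b*l))) by positivity)]
  have hinner : |(b-a)*(a+b)*(c*l) - a*b*(l^2-1)*(2*s-c)| ≤ B * ((a*l+b)*(a+b*l)) := by
    have step1 : |(b-a)*(a+b)*(c*l) - a*b*(l^2-1)*(2*s-c)|
        ≤ |(b-a)*(a+b)*(c*l)| + |a*b*(l^2-1)*(2*s-c)| := abs_sub _ _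
    have step2 : |(b-a)*(a+b)*(c*l)| = |(b-a)*(a+b)| * (|c| * l) := by
      rw [abs_mul, abs_mul c l, abs_of_pos hl]
    have step3 : |a*b*(l^2-1)*(2*s-c)| = a*b*|l^2-1| * |2*s-c| := by
      rw [abs_mul, abs_mul, abs_mul, abs_of_pos ha, abs_of_pos hb]
    rw [step2, step3] at step1
    have hq : |(b-a)*(a+b)| * (B * l) + a*b*|l^2-1| * B ≤ B * ((a*l+b)*(a+b*l)) := by
      rcases abs_cases ((b-a)*(a+b)) with ⟨h1, _⟩ | ⟨h1, _⟩ <;>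
        rcases abs_cases (l^2-1) with ⟨h2, _⟩ | ⟨h2, _⟩ <;> rw [h1, h2] <;>
        nlinarith [mul_nonneg (mul_nonneg hB hl.le) (sq_nonneg a),
          mul_nonneg (mul_nonneg hB hl.le) (sq_nonneg b),
          mul_nonneg hB (mul_pos ha hb).le,
          mul_nonneg (mul_nonneg (mul_nonneg hB (mul_pos ha hb).le) hl.le) hl.le]
    have m1 : |(b-a)*(a+b)| * (|c| * l) ≤ |(b-a)*(a+b)| * (B * l) := by
      apply mul_le_mul_of_nonneg_left _ (abs_nonneg _)
      exact mul_le_mul_of_nonneg_right hcB hl.le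
    have m2 : a*b*|l^2-1| * |2*s-c| ≤ a*b*|l^2-1| * B :=
      mul_le_mul_of_nonneg_left hsB (by positivity)
    linarith
  calc (b-a)^2/(2*b*((a*l+b)*(a+b*l))) * |(b-a)*(a+b)*(c*l) - a*b*(l^2-1)*(2*s-c)|
      ≤ (b-a)^2/(2*b*((a*l+b)*(a+b*l))) * (B * ((a*l+b)*(a+b*l))) :=
        mul_le_mul_of_nonneg_left hinner (by positivity)
    _ = (b-a)^2 * B / (2*b) := by field_simp

theorem tend1 (a b : ℝ) (ha : 0 < a) (hb : 0 < b) :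
    Filter.Tendsto (fun l : ℝ => (l+1)/(a*l+b)) Filter.atTop (nhds (1/a)) := by
  have h1 : Filter.Tendsto (fun l : ℝ => (1 + l⁻¹)/(a + b*l⁻¹)) Filter.atTop
      (nhds ((1+0)/(a + b*0))) := by
    apply Filter.Tendsto.div
    · exact tendsto_const_nhds.add tendsto_inv_atTop_zero
    · exact tendsto_const_nhds.add (tendsto_inv_atTop_zero.const_mul b)
    · simpa using ha.ne'
  have h2 : ((1:ℝ)+0)/(a + b*0) = 1/a := by norm_num
  rw [h2] at h1
  apply h1.congr'
  filter_upwards [Filter.eventually_gt_atTop (0:ℝ)] with l hl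
  have hinv : (0:ℝ) < l⁻¹ := inv_pos.mpr hl
  have d1 : (0:ℝ) < a + b*l⁻¹ := by nlinarith
  have d2 : (0:ℝ) < a*l+b := by nlinarith
  rw [div_eq_div_iff d1.ne' d2.ne']
  field_simp

theorem interval_param (g C w : ℝ) (hw : 0 ≤ w) (h : |g - C| ≤ w) :
    ∃ t ∈ Set.Icc (-1:ℝ) 1, g = C + w * t := by
  rcases eq_or_lt_of_le hw with h0 | h0
  · refine ⟨0, ⟨by norm_num, by norm_num⟩, ?_⟩
    have := abs_le.mp h
    have : g = C := by rw [← h0] at this; linarith [this.1, this.2]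
    rw [this]; ring
  · refine ⟨(g - C)/w, ⟨?_, ?_⟩, ?_⟩
    · rw [neg_le, ← neg_div, div_le_one h0]
      linarith [(abs_le.mp h).1]
    · rw [div_le_one h0]
      linarith [(abs_le.mp h).2]
    · field_simp
      ring


theorem alg1 (p y : Fin 2 → ℝ) (R : Matrix (Fin 2) (Fin 2) ℝ) (d0 d1 : ℝ) :
    p ⬝ᵥ (Rᵀ * Matrix.diagonal ![d0, d1] * R) *ᵥ y
      = d0 * ((R *ᵥ p) 0 * (R *ᵥ y) 0) + d1 * ((R *ᵥ p) 1 * (R *ᵥ y) 1) := by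
  simp [Matrix.mulVec, dotProduct, Matrix.mul_apply, Fin.sum_univ_two,
    Matrix.diagonal, Matrix.transpose_apply]
  ring

/-- The closure of the range of the topological derivative over elliptic shapes:
`cl { −(b−a)·a·pᵀRᵀ diag((λ+1)/(aλ+b), (λ+1)/(a+bλ)) R y : R ∈ O(2), λ > 0 }`
equals `−(b−a)(yᵀp) + ((b−a)²/(2b))·( yᵀp + [-1,1]·‖y‖₂‖p‖₂ )`. -/
theorem stmt_9 (y p : Fin 2 → ℝ) (a b : ℝ) (ha : 0 < a) (hb : 0 < b) :
    closure {z : ℝ | ∃ R : Matrix (Fin 2) (Fin 2) ℝ, Rᵀ * R = 1 ∧ ∃ l : ℝ, 0 < l ∧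
        z = -(b - a) * a *
          (p ⬝ᵥ (Rᵀ * Matrix.diagonal ![(l + 1) / (a * l + b), (l + 1) / (a + b * l)] * R) *ᵥ y)} =
      {z : ℝ | ∃ t ∈ Set.Icc (-1 : ℝ) 1,
        z = -(b - a) * (y ⬝ᵥ p) +
          (b - a) ^ 2 / (2 * b) * (y ⬝ᵥ p + t * (euclidNorm2 y * euclidNorm2 p))} := by
  obtain ⟨B, hBdef⟩ : ∃ x : ℝ, x = euclidNorm2 y * euclidNorm2 p := ⟨_, rfl⟩
  obtain ⟨c, hcdef⟩ : ∃ x : ℝ, x = p 0 * y 0 + p 1 * y 1 := ⟨_, rfl⟩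
  have hB : 0 ≤ B := by rw [hBdef]; unfold euclidNorm2; positivity
  have hB2 : B^2 = (y 0 ^2 + y 1 ^2) * (p 0 ^2 + p 1 ^2) := by
    rw [hBdef]; unfold euclidNorm2
    rw [mul_pow, Real.sq_sqrt (by positivity), Real.sq_sqrt (by positivity)]
  have hdot : y ⬝ᵥ p = c := by
    rw [hcdef]; simp [dotProduct, Fin.sum_univ_two]; ring
  have hc2 : c^2 ≤ B^2 := by
    rw [hB2, hcdef]; nlinarith [sq_nonneg (y 0 * p 1 - y 1 * p 0)]
  apply Set.Subset.antisymm
  · apply closure_minimal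
    · rintro z ⟨R, hR, l, hl, rfl⟩
      obtain ⟨hsum, hbound⟩ := orth_facts p y R hR
      obtain ⟨s, hsdef⟩ : ∃ x : ℝ, x = (R *ᵥ p) 0 * (R *ᵥ y) 0 := ⟨_, rfl⟩
      have hq1 : (R *ᵥ p) 1 * (R *ᵥ y) 1 = c - s := by rw [hcdef, hsdef]; linarith
      have hs2 : (2*s - c)^2 ≤ B^2 := by
        have h2sc : 2*s - c = (R *ᵥ p) 0 * (R *ᵥ y) 0 - (R *ᵥ p) 1 * (R *ᵥ y) 1 := by
          rw [hsdef, hcdef]; linarith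
        rw [h2sc, hB2]; exact hbound
      have hkey := key_ineq a b l s c B ha hb hl hB hc2 hs2
      obtain ⟨t, ht, hzt⟩ := interval_param _ _ _ (by positivity) hkey
      refine ⟨t, ht, ?_⟩
      rw [alg1, ← hsdef, hq1, hzt, hdot, ← hBdef]
      field_simp
      ring
    · have himg : {z : ℝ | ∃ t ∈ Set.Icc (-1 : ℝ) 1,
          z = -(b - a) * (y ⬝ᵥ p) +
            (b - a) ^ 2 / (2 * b) * (y ⬝ᵥ p + t * (euclidNorm2 y * euclidNorm2 p))}
          = (fun t : ℝ => -(b - a) * (y ⬝ᵥ p) +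
            (b - a) ^ 2 / (2 * b) * (y ⬝ᵥ p + t * (euclidNorm2 y * euclidNorm2 p)))
              '' Set.Icc (-1 : ℝ) 1 := by
        ext w
        simp only [Set.mem_image, Set.mem_setOf_eq]
        constructor
        · rintro ⟨t, ht, rfl⟩; exact ⟨t, ht, rfl⟩
        · rintro ⟨t, ht, rfl⟩; exact ⟨t, ht, rfl⟩
      rw [himg]
      exact (isCompact_Icc.image (by continuity)).isClosed
  · rintro z ⟨t, ht, rfl⟩
    obtain ⟨v, hvdef⟩ : ∃ x : ℝ, x = (c - t*B)/2 := ⟨_, rfl⟩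
    have hv : (2 * v - (p 0 * y 0 + p 1 * y 1))^2 ≤ (y 0 ^2 + y 1 ^2) * (p 0 ^2 + p 1 ^2) := by
      rw [← hcdef, ← hB2, hvdef]
      have h1 : 2 * ((c - t*B)/2) - c = -(t*B) := by ring
      rw [h1]
      have ht1 : t^2 ≤ 1 := by nlinarith [ht.1, ht.2]
      nlinarith [sq_nonneg B]
    obtain ⟨R, hR, hRv⟩ := realize p y v hv
    have hq1 : (R *ᵥ p) 1 * (R *ᵥ y) 1 = c - v := by
      obtain ⟨hsum, _⟩ := orth_facts p y R hR
      rw [hcdef]; linarith [hRv, hsum]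
    -- the approximating sequence
    have hmem : ∀ n : ℕ, -(b-a) * a * (((n:ℝ)+1+1)/(a*((n:ℝ)+1)+b) * v
        + ((n:ℝ)+1+1)/(a+b*((n:ℝ)+1)) * (c - v)) ∈
        {z : ℝ | ∃ R : Matrix (Fin 2) (Fin 2) ℝ, Rᵀ * R = 1 ∧ ∃ l : ℝ, 0 < l ∧
          z = -(b - a) * a *
            (p ⬝ᵥ (Rᵀ * Matrix.diagonal ![(l + 1) / (a * l + b), (l + 1) / (a + b * l)] * R) *ᵥ y)} := by
      intro n
      refine ⟨R, hR, (n:ℝ)+1, by positivity, ?_⟩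
      rw [alg1, hRv, hq1]
    have hcomp : Filter.Tendsto (fun n : ℕ => (n:ℝ)+1) Filter.atTop Filter.atTop :=
      Filter.tendsto_atTop_add_const_right _ 1 tendsto_natCast_atTop_atTop
    have t1 := (tend1 a b ha hb).mul_const v
    have t2 : Filter.Tendsto (fun l : ℝ => (l+1)/(a+b*l) * (c-v)) Filter.atTop
        (nhds (1/b * (c-v))) := by
      have := (tend1 b a hb ha).mul_const (c-v)
      have hfe : (fun l : ℝ => (l+1)/(b*l+a) * (c-v)) = fun l : ℝ => (l+1)/(a+b*l) * (c-v) := by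
        funext l; rw [add_comm (b*l) a]
      rwa [hfe] at this
    have hg : Filter.Tendsto (fun l : ℝ => -(b-a) * a * ((l+1)/(a*l+b) * v
        + (l+1)/(a+b*l) * (c - v))) Filter.atTop
        (nhds (-(b-a) * a * (1/a * v + 1/b * (c - v)))) := (t1.add t2).const_mul _
    have hx := hg.comp hcomp
    have hLz : -(b-a) * a * (1/a * v + 1/b * (c - v))
        = -(b - a) * (y ⬝ᵥ p) +
          (b - a) ^ 2 / (2 * b) * (y ⬝ᵥ p + t * (euclidNorm2 y * euclidNorm2 p)) := by
      rw [hdot, ← hBdef, hvdef]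
      field_simp
      ring
    rw [← hLz]
    exact mem_closure_of_tendsto hx (Filter.Eventually.of_forall hmem)
end

section
/- Let y, p ∈ ℝ² and a, b > 0 be given. Then the infimum over R ∈ O(2) and λ > 0 of −(b−a)·a·pᵀ Rᵀ diag((λ+1)/(aλ+b), (λ+1)/(a+bλ)) R y equals −(b−a)·(yᵀp) + ((b−a)²/(2b))·( yᵀp − ‖y‖₂·‖p‖₂ ). -/
open Matrix

lemma lb_scalar (a b l d K s : ℝ) (ha : 0 < a) (hb : 0 < b) (hl : 0 < l)
    (hdK : d^2 ≤ K^2) (hsK : s^2 ≤ K^2) (hK : 0 ≤ K) :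
    -(b-a)*d + (b-a)^2/(2*b)*(d-K) ≤
      -(b-a)*a*((l+1)/(a*l+b)*((d+s)/2) + (l+1)/(a+b*l)*((d-s)/2)) := by
  have hP1 : 0 < a*l+b := by positivity
  have hP2 : 0 < a+b*l := by positivity
  have hd1 : -K ≤ d := by nlinarith
  have hd2 : d ≤ K := by nlinarith
  have hs1 : -K ≤ s := by nlinarith
  have hs2 : s ≤ K := by nlinarith
  have hN : 0 ≤ (b-a)*(a+b)*l*d - a*b*(l^2-1)*s + K*((a*l+b)*(a+b*l)) := by
    nlinarith [mul_nonneg (mul_nonneg (mul_nonneg ha.le hb.le) (mul_pos hl hl).le) (sub_nonneg.2 hs2),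
      mul_nonneg (mul_nonneg ha.le hb.le) (by linarith : (0:ℝ) ≤ K + s),
      mul_nonneg (mul_nonneg (mul_pos ha ha).le hl.le) (by linarith : (0:ℝ) ≤ K + d),
      mul_nonneg (mul_nonneg (mul_pos hb hb).le hl.le) (by linarith : (0:ℝ) ≤ K + d),
      mul_nonneg (mul_nonneg (mul_pos ha ha).le hl.le) (sub_nonneg.2 hd2),
      mul_nonneg (mul_nonneg (mul_pos hb hb).le hl.le) (sub_nonneg.2 hd2)]
  rw [← sub_nonneg]
  have key : -(b-a)*a*((l+1)/(a*l+b)*((d+s)/2) + (l+1)/(a+b*l)*((d-s)/2))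
      - (-(b-a)*d + (b-a)^2/(2*b)*(d-K))
      = (b-a)^2 * ((b-a)*(a+b)*l*d - a*b*(l^2-1)*s + K*((a*l+b)*(a+b*l)))
        / (2*b*((a*l+b)*(a+b*l))) := by
    field_simp
    ring
  rw [key]
  exact div_nonneg (mul_nonneg (sq_nonneg _) hN) (by positivity)

lemma expand_expr (y p : Fin 2 → ℝ) (a b l : ℝ) (R : Matrix (Fin 2) (Fin 2) ℝ) :
    p ⬝ᵥ (Rᵀ * Matrix.diagonal ![(l + 1) / (a * l + b), (l + 1) / (a + b * l)] * R) *ᵥ y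
    = (l + 1) / (a * l + b) * ((R 0 0 * y 0 + R 0 1 * y 1) * (R 0 0 * p 0 + R 0 1 * p 1))
    + (l + 1) / (a + b * l) * ((R 1 0 * y 0 + R 1 1 * y 1) * (R 1 0 * p 0 + R 1 1 * p 1)) := by
  simp [Matrix.mul_apply, Matrix.mulVec, dotProduct, Fin.sum_univ_two,
    Matrix.diagonal_apply, Matrix.transpose_apply]
  ring

lemma member_ge (y p : Fin 2 → ℝ) (a b l d K : ℝ) (ha : 0 < a) (hb : 0 < b) (hl : 0 < l)
    (hd : d = y 0 * p 0 + y 1 * p 1) (hKnn : 0 ≤ K)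
    (hK2 : K^2 = (y 0^2 + y 1^2) * (p 0^2 + p 1^2))
    (R : Matrix (Fin 2) (Fin 2) ℝ) (hR : Rᵀ * R = 1) :
    -(b-a)*d + (b-a)^2/(2*b)*(d-K) ≤ -(b - a) * a *
      (p ⬝ᵥ (Rᵀ * Matrix.diagonal ![(l + 1) / (a * l + b), (l + 1) / (a + b * l)] * R) *ᵥ y) := by
  have h00 := congrFun (congrFun hR 0) 0
  have h01 := congrFun (congrFun hR 0) 1
  have h11 := congrFun (congrFun hR 1) 1
  simp [Matrix.mul_apply, Fin.sum_univ_two, Matrix.one_apply, Matrix.transpose_apply]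
    at h00 h01 h11
  rw [expand_expr]
  obtain ⟨u0, hu0⟩ : ∃ x : ℝ, x = R 0 0 * y 0 + R 0 1 * y 1 := ⟨_, rfl⟩
  obtain ⟨u1, hu1⟩ : ∃ x : ℝ, x = R 1 0 * y 0 + R 1 1 * y 1 := ⟨_, rfl⟩
  obtain ⟨v0, hv0⟩ : ∃ x : ℝ, x = R 0 0 * p 0 + R 0 1 * p 1 := ⟨_, rfl⟩
  obtain ⟨v1, hv1⟩ : ∃ x : ℝ, x = R 1 0 * p 0 + R 1 1 * p 1 := ⟨_, rfl⟩
  rw [← hu0, ← hu1, ← hv0, ← hv1]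
  have hsum : u0*v0 + u1*v1 = d := by
    rw [hu0, hu1, hv0, hv1, hd]
    linear_combination (y 0 * p 0) * h00 + (y 0 * p 1 + y 1 * p 0) * h01 + (y 1 * p 1) * h11
  have hu : u0^2 + u1^2 = y 0^2 + y 1^2 := by
    rw [hu0, hu1]
    linear_combination (y 0^2) * h00 + (2 * y 0 * y 1) * h01 + (y 1^2) * h11
  have hv : v0^2 + v1^2 = p 0^2 + p 1^2 := by
    rw [hv0, hv1]
    linear_combination (p 0^2) * h00 + (2 * p 0 * p 1) * h01 + (p 1^2) * h11
  have hmul : (u0^2+u1^2)*(v0^2+v1^2) = (y 0^2+y 1^2)*(p 0^2+p 1^2) := by rw [hu, hv]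
  have hsK : (u0*v0 - u1*v1)^2 ≤ K^2 := by
    nlinarith [sq_nonneg (u0*v1 + u1*v0), hmul, hK2]
  have hdK : d^2 ≤ K^2 := by
    rw [hd, hK2]; nlinarith [sq_nonneg (y 0 * p 1 - y 1 * p 0)]
  have e : (l+1)/(a*l+b)*(u0*v0) + (l+1)/(a+b*l)*(u1*v1)
      = (l+1)/(a*l+b)*((d+(u0*v0-u1*v1))/2) + (l+1)/(a+b*l)*((d-(u0*v0-u1*v1))/2) := by
    linear_combination ((l+1)/(a*l+b) + (l+1)/(a+b*l))/2 * hsum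
  rw [e]
  exact lb_scalar a b l d K (u0*v0-u1*v1) ha hb hl hdK hsK hKnn

set_option maxHeartbeats 1000000 in
/-- The infimum over `R ∈ O(2)` and `λ > 0` of
`−(b−a)·a·pᵀ Rᵀ diag((λ+1)/(aλ+b), (λ+1)/(a+bλ)) R y`
equals `−(b−a)(yᵀp) + ((b−a)²/(2b))·( yᵀp − ‖y‖₂‖p‖₂ )`. -/
theorem stmt_10 (y p : Fin 2 → ℝ) (a b : ℝ) (ha : 0 < a) (hb : 0 < b) :
    sInf {z : ℝ | ∃ R : Matrix (Fin 2) (Fin 2) ℝ, Rᵀ * R = 1 ∧ ∃ l : ℝ, 0 < l ∧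
        z = -(b - a) * a *
          (p ⬝ᵥ (Rᵀ * Matrix.diagonal ![(l + 1) / (a * l + b), (l + 1) / (a + b * l)] * R) *ᵥ y)} =
      -(b - a) * (y ⬝ᵥ p) +
        (b - a) ^ 2 / (2 * b) * (y ⬝ᵥ p - euclidNorm2 y * euclidNorm2 p) := by
  obtain ⟨d, hd⟩ : ∃ x : ℝ, x = y 0 * p 0 + y 1 * p 1 := ⟨_, rfl⟩
  obtain ⟨K, hK⟩ : ∃ x : ℝ, x = euclidNorm2 y * euclidNorm2 p := ⟨_, rfl⟩
  have hdp : y ⬝ᵥ p = d := by rw [hd]; simp [dotProduct, Fin.sum_univ_two]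
  rw [hdp, ← hK]
  have hKnn : 0 ≤ K := by
    rw [hK]; exact mul_nonneg (Real.sqrt_nonneg _) (Real.sqrt_nonneg _)
  have hK2 : K^2 = (y 0^2 + y 1^2) * (p 0^2 + p 1^2) := by
    rw [hK, euclidNorm2, euclidNorm2, mul_pow, Real.sq_sqrt (by positivity),
      Real.sq_sqrt (by positivity)]
  have hdK : d^2 ≤ K^2 := by
    rw [hd, hK2]; nlinarith [sq_nonneg (y 0 * p 1 - y 1 * p 0)]
  set S := {z : ℝ | ∃ R : Matrix (Fin 2) (Fin 2) ℝ, Rᵀ * R = 1 ∧ ∃ l : ℝ, 0 < l ∧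
        z = -(b - a) * a *
          (p ⬝ᵥ (Rᵀ * Matrix.diagonal ![(l + 1) / (a * l + b), (l + 1) / (a + b * l)] * R) *ᵥ y)}
  have hlow : ∀ z ∈ S, -(b-a)*d + (b-a)^2/(2*b)*(d-K) ≤ z := by
    rintro z ⟨R, hR, l, hl, rfl⟩
    exact member_ge y p a b l d K ha hb hl hd hKnn hK2 R hR
  have hbdd : BddBelow S := ⟨_, hlow⟩
  have hone : -(b - a) * a * ((1+1)/(a*1+b) * (y 0 * p 0) + (1+1)/(a+b*1) * (y 1 * p 1)) ∈ S := by
    refine ⟨1, by simp, 1, one_pos, ?_⟩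
    rw [expand_expr]
    norm_num [Matrix.one_apply]
  refine le_antisymm ?_ (le_csInf ⟨_, hone⟩ hlow)
  by_cases hK0 : K = 0
  · have hd0 : d = 0 := by
      rw [hK0] at hdK; norm_num at hdK
      have h2 : d^2 = 0 := by rw [hdK]; norm_num
      exact pow_eq_zero_iff two_ne_zero |>.1 h2
    have hyp : y 1 * p 1 = -(y 0 * p 0) := by
      have := hd0; rw [hd] at this; linarith
    have h0 : -(b - a) * a * ((1+1)/(a*1+b) * (y 0 * p 0) + (1+1)/(a+b*1) * (y 1 * p 1)) = 0 := by
      rw [hyp]; ring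
    rw [hd0, hK0]
    calc sInf S ≤ _ := csInf_le hbdd hone
      _ = -(b-a)*0 + (b-a)^2/(2*b)*(0-0) := by rw [h0]; ring
  · have hKpos : 0 < K := lt_of_le_of_ne hKnn (Ne.symm hK0)
    obtain ⟨A, hA⟩ : ∃ x : ℝ, x = y 0 * p 0 - y 1 * p 1 := ⟨_, rfl⟩
    obtain ⟨B, hB⟩ : ∃ x : ℝ, x = y 0 * p 1 + y 1 * p 0 := ⟨_, rfl⟩
    have hAB : A^2 + B^2 = K^2 := by rw [hA, hB, hK2]; ring
    have hKA1 : 0 ≤ K + A := by nlinarith [sq_nonneg B]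
    have hKA2 : 0 ≤ K - A := by nlinarith [sq_nonneg B]
    obtain ⟨cc, hcc⟩ : ∃ x : ℝ, x = Real.sqrt ((K+A)/(2*K)) := ⟨_, rfl⟩
    obtain ⟨ss, hss⟩ : ∃ x : ℝ, x = (if 0 ≤ B then 1 else -1) * Real.sqrt ((K-A)/(2*K)) :=
      ⟨_, rfl⟩
    have hcc2 : cc^2 = (K+A)/(2*K) := by rw [hcc]; exact Real.sq_sqrt (by positivity)
    have hss2 : ss^2 = (K-A)/(2*K) := by
      rw [hss, mul_pow]
      rcases le_or_gt 0 B with h | h <;>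
        simp [h, Real.sq_sqrt (by positivity : (0:ℝ) ≤ (K-A)/(2*K))]
    have hcs : cc * ss = B/(2*K) := by
      rw [hcc, hss]
      rw [show Real.sqrt ((K+A)/(2*K)) * ((if 0 ≤ B then 1 else -1) * Real.sqrt ((K-A)/(2*K)))
        = (if 0 ≤ B then 1 else -1) * (Real.sqrt ((K+A)/(2*K)) * Real.sqrt ((K-A)/(2*K))) by ring]
      rw [← Real.sqrt_mul (by positivity)]
      have harg : (K+A)/(2*K) * ((K-A)/(2*K)) = (B/(2*K))^2 := by
        rw [div_mul_div_comm, show (K+A)*(K-A) = B^2 by nlinarith, div_pow]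
        ring_nf
      rw [harg, Real.sqrt_sq_eq_abs]
      rcases le_or_gt 0 B with h | h
      · rw [if_pos h, one_mul, abs_of_nonneg (by positivity)]
      · rw [if_neg (not_le.2 h),
          abs_of_nonpos (div_nonpos_of_nonpos_of_nonneg h.le (by positivity))]
        ring
    have hKne : (2*K : ℝ) ≠ 0 := by positivity
    have hcc2' : 2*K*cc^2 = K+A := by rw [hcc2]; field_simp
    have hss2' : 2*K*ss^2 = K-A := by rw [hss2]; field_simp
    have hcs' : 2*K*(cc*ss) = B := by rw [hcs]; field_simp
    have h1 : cc^2 + ss^2 = 1 := by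
      have h2 : 2*K*(cc^2+ss^2) = 2*K*1 := by linear_combination hcc2' + hss2'
      exact mul_left_cancel₀ hKne h2
    obtain ⟨R0, hR0⟩ : ∃ M : Matrix (Fin 2) (Fin 2) ℝ, M = ![![cc,ss],![ss,-cc]] := ⟨_, rfl⟩
    have e00 : R0 0 0 = cc := by rw [hR0]; simp
    have e01 : R0 0 1 = ss := by rw [hR0]; simp
    have e10 : R0 1 0 = ss := by rw [hR0]; simp
    have e11 : R0 1 1 = -cc := by rw [hR0]; simp
    have hR : R0ᵀ * R0 = 1 := by
      ext i j
      fin_cases i <;> fin_cases j <;>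
        simp [Matrix.mul_apply, Fin.sum_univ_two, Matrix.one_apply, Matrix.transpose_apply,
          e00, e01, e10, e11] <;>
        first
          | linear_combination h1
          | ring
    have h2a : 2*K*((cc*y 0+ss*y 1)*(cc*p 0+ss*p 1)) = K*(y 0*p 0+y 1*p 1) + K^2 := by
      linear_combination (y 0*p 0)*hcc2' + (y 1*p 1)*hss2' + (y 0*p 1+y 1*p 0)*hcs'
        - A*hA - B*hB + hAB
    have h2b : 2*K*((ss*y 0+(-cc)*y 1)*(ss*p 0+(-cc)*p 1)) = K*(y 0*p 0+y 1*p 1) - K^2 := by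
      linear_combination (y 0*p 0)*hss2' + (y 1*p 1)*hcc2' - (y 0*p 1+y 1*p 0)*hcs'
        + A*hA + B*hB - hAB
    have huv1 : (cc*y 0+ss*y 1)*(cc*p 0+ss*p 1) = (d+K)/2 :=
      mul_left_cancel₀ hKne (by rw [h2a, ← hd]; ring)
    have huv2 : (ss*y 0+(-cc)*y 1)*(ss*p 0+(-cc)*p 1) = (d-K)/2 :=
      mul_left_cancel₀ hKne (by rw [h2b, ← hd]; ring)
    have hmem : ∀ l : ℝ, 0 < l →
        -(b-a)*a*((l+1)/(a*l+b)*((d+K)/2) + (l+1)/(a+b*l)*((d-K)/2)) ∈ S := by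
      intro l hl
      refine ⟨R0, hR, l, hl, ?_⟩
      rw [expand_expr, e00, e01, e10, e11, huv1, huv2]
    have htend : Filter.Tendsto
        (fun l : ℝ => -(b-a)*a*((l+1)/(a*l+b)*((d+K)/2) + (l+1)/(a+b*l)*((d-K)/2)))
        Filter.atTop (nhds (-(b-a)*d + (b-a)^2/(2*b)*(d-K))) := by
      have hinv : Filter.Tendsto (fun l : ℝ => 1/l) Filter.atTop (nhds 0) := by
        simpa using tendsto_inv_atTop_zero
      have hnum : Filter.Tendsto (fun l : ℝ => 1 + 1/l) Filter.atTop (nhds (1 + 0)) :=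
        (tendsto_const_nhds : Filter.Tendsto (fun _ : ℝ => (1:ℝ)) Filter.atTop (nhds 1)).add hinv
      have hbl : Filter.Tendsto (fun l : ℝ => b/l) Filter.atTop (nhds 0) := by
        simpa [div_eq_mul_inv] using tendsto_inv_atTop_zero.const_mul b
      have hal : Filter.Tendsto (fun l : ℝ => a/l) Filter.atTop (nhds 0) := by
        simpa [div_eq_mul_inv] using tendsto_inv_atTop_zero.const_mul a
      have h1' : Filter.Tendsto (fun l : ℝ => (l+1)/(a*l+b)) Filter.atTop (nhds (1/a)) := by
        have heq : ∀ᶠ l : ℝ in Filter.atTop, (1+1/l)/(a+b/l) = (l+1)/(a*l+b) := by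
          filter_upwards [Filter.eventually_gt_atTop 0] with l hl
          rw [div_eq_div_iff (by positivity) (by positivity)]
          field_simp
        refine Filter.Tendsto.congr' heq ?_
        have hden : Filter.Tendsto (fun l : ℝ => a + b/l) Filter.atTop (nhds (a + 0)) :=
          (tendsto_const_nhds : Filter.Tendsto (fun _ : ℝ => a) Filter.atTop (nhds a)).add hbl
        have h := hnum.div hden (by simpa using ha.ne')
        simpa [Pi.div_def] using h
      have h2' : Filter.Tendsto (fun l : ℝ => (l+1)/(a+b*l)) Filter.atTop (nhds (1/b)) := by
        have heq : ∀ᶠ l : ℝ in Filter.atTop, (1+1/l)/(a/l+b) = (l+1)/(a+b*l) := by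
          filter_upwards [Filter.eventually_gt_atTop 0] with l hl
          rw [div_eq_div_iff (by positivity) (by positivity)]
          field_simp
        refine Filter.Tendsto.congr' heq ?_
        have hden : Filter.Tendsto (fun l : ℝ => a/l + b) Filter.atTop (nhds (0 + b)) :=
          hal.add (tendsto_const_nhds : Filter.Tendsto (fun _ : ℝ => b) Filter.atTop (nhds b))
        have h := hnum.div hden (by simpa using hb.ne')
        simpa [Pi.div_def] using h
      have hcomb := ((h1'.mul_const ((d+K)/2)).add (h2'.mul_const ((d-K)/2))).const_mul
        (-(b-a)*a)
      have hLval : -(b-a)*a*(1/a*((d+K)/2) + 1/b*((d-K)/2))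
          = -(b-a)*d + (b-a)^2/(2*b)*(d-K) := by
        field_simp
        ring
      rw [hLval] at hcomb
      exact hcomb
    refine ge_of_tendsto htend ?_
    filter_upwards [Filter.eventually_gt_atTop 0] with l hl
    exact csInf_le hbdd (hmem l hl)
end

section
/- Let α > 0, let a, b ∈ ℝ with a ≥ α and b ≥ α, let y, p ∈ ℝ², and let g_a, g_b ∈ ℝ. If −(b−a)·(y·p) + g_b − g_a + ((b−a)²/(2b))·( y·p − ‖y‖₂·‖p‖₂ ) ≥ 0, then −(b−a)·(y·p)·( 2a/(b+a) ) + g_b − g_a ≥ 0. -/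
open RealInnerProductSpace

/- Subtracting the two inequalities leaves `(b - a)² (s / (b + a) + (N - s) / (2b))` with
`s = ⟪y, p⟫` and `N = ‖y‖ ‖p‖`. By Cauchy–Schwarz `N - s ≥ |s| - s`, so the bracket is at least
`s / (b + a) ≥ 0` when `s ≥ 0`, and at least `-s (1/b - 1/(b + a)) ≥ 0` when `s < 0`. -/

lemma div_add_sub_div_two_mul_nonneg {a b s N : ℝ} (ha : 0 ≤ a) (hb : 0 < b) (hsN : |s| ≤ N) :
    0 ≤ s / (b + a) + (N - s) / (2 * b) := by
  have hba : 0 < b + a := by linarith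
  rcases le_total 0 s with hs | hs
  · have hNs : 0 ≤ N - s := by linarith [le_abs_self s]
    positivity
  · have hNs : -2 * s ≤ N - s := by linarith [neg_abs_le s, abs_of_nonpos hs]
    calc 0 ≤ -s * (1 / b - 1 / (b + a)) :=
          mul_nonneg (by linarith) (sub_nonneg.mpr (one_div_le_one_div_of_le hb (by linarith)))
      _ = s / (b + a) + -2 * s / (2 * b) := by field_simp; ring
      _ ≤ s / (b + a) + (N - s) / (2 * b) := by gcongr

lemma ball_ineq_of_elliptic_ineq {a b s N g : ℝ} (ha : 0 ≤ a) (hb : 0 < b) (hsN : |s| ≤ N)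
    (h : -(b - a) * s + g + (b - a) ^ 2 / (2 * b) * (s - N) ≥ 0) :
    -(b - a) * s * (2 * a / (b + a)) + g ≥ 0 := by
  have hba : 0 < b + a := by linarith
  have hdiff : -(b - a) * s * (2 * a / (b + a)) + g
      - (-(b - a) * s + g + (b - a) ^ 2 / (2 * b) * (s - N))
      = (b - a) ^ 2 * (s / (b + a) + (N - s) / (2 * b)) := by
    field_simp; ring
  linarith [mul_nonneg (sq_nonneg (b - a)) (div_add_sub_div_two_mul_nonneg ha hb hsN)]

/-- The two-dimensional elliptic-shape maximum principle inequality implies the ball-shape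
maximum principle inequality (with factor `a·d/(b+a(d−1)) = 2a/(b+a)` for `d = 2`). -/
theorem stmt_14 (α : ℝ) (hα : 0 < α) (a b : ℝ) (ha : α ≤ a) (hb : α ≤ b)
    (y p : EuclideanSpace ℝ (Fin 2)) (ga gb : ℝ)
    (h : -(b - a) * ⟪y, p⟫ + gb - ga +
        (b - a) ^ 2 / (2 * b) * (⟪y, p⟫ - ‖y‖ * ‖p‖) ≥ 0) :
    -(b - a) * ⟪y, p⟫ * (2 * a / (b + a)) + gb - ga ≥ 0 := by
  have key := ball_ineq_of_elliptic_ineq (a := a) (b := b) (g := gb - ga) (by linarith)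
    (by linarith) (abs_real_inner_le_norm y p) (by linarith)
  linarith
end

section
/- Let 0 < α < β, let a₀ ∈ [α, β], let ℓ ∈ ℝ, and let y, p ∈ ℝ². Set s := y·p and n := ‖y‖₂·‖p‖₂ (so s ≤ n by Cauchy–Schwarz). Suppose that for all b ∈ [α, β] it holds (b − a₀)(ℓ − s) ≥ ((b − a₀)²/(2b))·(n − s). Then: (i) if ℓ = s then n = s; (ii) if ℓ > s then a₀ = α; (iii) if ℓ < s then a₀ = β; (iv) if a₀ = α then ℓ − s ≥ ((β − α)/(2β))·(n − s) ≥ 0; (v) if a₀ = β then ℓ − s ≤ ((α − β)/(2α))·(n − s) ≤ 0. -/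
open RealInnerProductSpace

/-!
Write `d = n - s`, which is nonnegative by Cauchy–Schwarz, and `m = ℓ - s`. Testing the
inequality at `b` with `t = b - a₀` gives `t * (t / (2b) * d) ≤ t * m`, whose left side is
nonnegative. Hence `t * m ≥ 0` at both endpoints, which forces `a₀` to the correct endpoint
according to the sign of `m`; if `m = 0`, an endpoint `b ≠ a₀` forces `d ≤ 0`; and at
`a₀ = α` (resp. `a₀ = β`) dividing the inequality at `b = β` (resp. `b = α`) by `t` gives the
bounds (iv) and (v).
-/

section VariationalInequality

variable {t b m d : ℝ}

theorem mul_nonneg_of_sq_div_mul_le (hb : 0 < b) (hd : 0 ≤ d)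
    (h : t ^ 2 / (2 * b) * d ≤ t * m) : 0 ≤ t * m :=
  le_trans (by positivity) h

theorem nonpos_of_sq_div_mul_le_zero (ht : t ≠ 0) (hb : 0 < b)
    (h : t ^ 2 / (2 * b) * d ≤ 0) : d ≤ 0 :=
  nonpos_of_mul_nonpos_right h (by positivity)

theorem div_mul_le_of_sq_div_mul_le (ht : 0 < t) (h : t ^ 2 / (2 * b) * d ≤ t * m) :
    t / (2 * b) * d ≤ m := by
  refine le_of_mul_le_mul_left ?_ ht
  calc t * (t / (2 * b) * d) = t ^ 2 / (2 * b) * d := by ring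
    _ ≤ t * m := h

theorem le_div_mul_of_sq_div_mul_le (ht : t < 0) (h : t ^ 2 / (2 * b) * d ≤ t * m) :
    m ≤ t / (2 * b) * d := by
  refine (mul_le_mul_left_of_neg ht).1 ?_
  calc t * (t / (2 * b) * d) = t ^ 2 / (2 * b) * d := by ring
    _ ≤ t * m := h

end VariationalInequality

/-- Characterization of solutions of the 2d maximum-principle variational inequality for the
linear cost `g(a) = ℓ·a` with control constraint `a ∈ [α, β]`. -/
theorem stmt_15 (α β : ℝ) (hα : 0 < α) (hαβ : α < β)
    (a₀ : ℝ) (ha₀ : a₀ ∈ Set.Icc α β) (ℓ : ℝ)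
    (y p : EuclideanSpace ℝ (Fin 2)) (s n : ℝ)
    (hs : s = ⟪y, p⟫) (hn : n = ‖y‖ * ‖p‖)
    (h : ∀ b ∈ Set.Icc α β, (b - a₀) * (ℓ - s) ≥ (b - a₀) ^ 2 / (2 * b) * (n - s)) :
    (ℓ = s → n = s) ∧
    (ℓ > s → a₀ = α) ∧
    (ℓ < s → a₀ = β) ∧
    (a₀ = α → ℓ - s ≥ (β - α) / (2 * β) * (n - s) ∧ (β - α) / (2 * β) * (n - s) ≥ 0) ∧
    (a₀ = β → ℓ - s ≤ (α - β) / (2 * α) * (n - s) ∧ (α - β) / (2 * α) * (n - s) ≤ 0) := by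
  obtain ⟨hαa₀, ha₀β⟩ := ha₀
  have hβ : 0 < β := hα.trans hαβ
  have hd : 0 ≤ n - s := by rw [hs, hn]; linarith [real_inner_le_norm y p]
  have at_α := h α ⟨le_rfl, hαβ.le⟩
  have at_β := h β ⟨hαβ.le, le_rfl⟩
  refine ⟨fun hls => ?_, fun hgt => ?_, fun hlt => ?_, fun heq => ?_, fun heq => ?_⟩
  · obtain ⟨b, hb, hba₀⟩ : ∃ b ∈ Set.Icc α β, b ≠ a₀ := by
      by_cases hα₀ : α = a₀
      · exact ⟨β, ⟨hαβ.le, le_rfl⟩, by linarith⟩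
      · exact ⟨α, ⟨le_rfl, hαβ.le⟩, hα₀⟩
    have hb' := h b hb
    rw [hls, sub_self, mul_zero] at hb'
    linarith [nonpos_of_sq_div_mul_le_zero (sub_ne_zero.2 hba₀) (hα.trans_le hb.1) hb']
  · by_contra hne
    have hneg : α - a₀ < 0 := sub_neg.2 (lt_of_le_of_ne hαa₀ (Ne.symm hne))
    exact (mul_neg_of_neg_of_pos hneg (sub_pos.2 hgt)).not_ge
      (mul_nonneg_of_sq_div_mul_le hα hd at_α)
  · by_contra hne
    have hpos : 0 < β - a₀ := sub_pos.2 (lt_of_le_of_ne ha₀β hne)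
    exact (mul_neg_of_pos_of_neg hpos (sub_neg.2 hlt)).not_ge
      (mul_nonneg_of_sq_div_mul_le hβ hd at_β)
  · rw [heq] at at_β
    exact ⟨div_mul_le_of_sq_div_mul_le (sub_pos.2 hαβ) at_β,
      mul_nonneg (div_nonneg (sub_nonneg.2 hαβ.le) (by positivity)) hd⟩
  · rw [heq] at at_α
    exact ⟨le_div_mul_of_sq_div_mul_le (sub_neg.2 hαβ) at_α,
      mul_nonpos_of_nonpos_of_nonneg (div_nonpos_of_nonpos_of_nonneg (sub_nonpos.2 hαβ.le)
        (by positivity)) hd⟩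
end

section
/- Let V be a real Hilbert space, let d ≥ 1, let B : V × V → ℝ be a bounded bilinear form that is coercive (there is μ > 0 with B(v,v) ≥ μ‖v‖² for all v ∈ V) and symmetric, let T : V → ℝ^d be a bounded linear map, and let c ∈ ℝ^{d×d} be a symmetric matrix. For each p ∈ ℝ^d let Q_p ∈ V be the unique element (given by the Lax–Milgram theorem) with B(v, Q_p) + (c·T(v))·p = 0 for all v ∈ V. Define R ∈ ℝ^{d×d} by pᵀ R y := −(c·y)·T(Q_p) for p, y ∈ ℝ^d (this expression is bilinear in (p, y)). Then R is symmetric: pᵀ R y = yᵀ R p for all p, y ∈ ℝ^d. -/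
open Matrix

/-! Testing the equation defining `Q y` against `v = Q p` and using the symmetry of `c` turns
`pᵀ R y = −(c·y)·T(Q p)` into the energy pairing `B(Q p, Q y)`, which is symmetric in `p, y`
because `B` is. -/

theorem Matrix.mulVec_dotProduct_comm_of_transpose_eq {n R : Type*} [Fintype n] [CommSemiring R]
    {c : Matrix n n R} (hc : cᵀ = c) (x y : n → R) : (c *ᵥ x) ⬝ᵥ y = (c *ᵥ y) ⬝ᵥ x := by
  rw [dotProduct_comm, dotProduct_mulVec, ← mulVec_transpose, hc]

theorem neg_mulVec_dotProduct_eq_of_forall_add_eq_zero {V n R : Type*} [Fintype n] [CommRing R]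
    {B : V → V → R} {T : V → n → R} {c : Matrix n n R} (hc : cᵀ = c) {Q : (n → R) → V}
    (hQ : ∀ p v, B v (Q p) + (c *ᵥ T v) ⬝ᵥ p = 0) (p y : n → R) :
    -((c *ᵥ y) ⬝ᵥ T (Q p)) = B (Q p) (Q y) := by
  rw [c.mulVec_dotProduct_comm_of_transpose_eq hc, eq_comm, ← add_eq_zero_iff_eq_neg]
  exact hQ y (Q p)

theorem stmt_17_general {V : Type*} [NormedAddCommGroup V] [InnerProductSpace ℝ V]
    (d : ℕ)
    (B : V →L[ℝ] V →L[ℝ] ℝ)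
    (hsymm : ∀ u v : V, B u v = B v u)
    (T : V →L[ℝ] (Fin d → ℝ))
    (c : Matrix (Fin d) (Fin d) ℝ) (hc : cᵀ = c)
    (Q : (Fin d → ℝ) → V)
    (hQ : ∀ (p : Fin d → ℝ) (v : V), B v (Q p) + (c *ᵥ T v) ⬝ᵥ p = 0)
    (R : Matrix (Fin d) (Fin d) ℝ)
    (hR : ∀ p y : Fin d → ℝ, p ⬝ᵥ R *ᵥ y = -((c *ᵥ y) ⬝ᵥ T (Q p))) :
    ∀ p y : Fin d → ℝ, p ⬝ᵥ R *ᵥ y = y ⬝ᵥ R *ᵥ p := by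
  intro p y
  have energy := neg_mulVec_dotProduct_eq_of_forall_add_eq_zero (B := fun u v => B u v) hc hQ
  rw [hR, hR, energy, energy, hsymm]

/-- Symmetry of the sensitivity matrix: for a bounded, coercive, symmetric bilinear form `B`
on a real Hilbert space `V`, a bounded linear `T : V → ℝ^d`, a symmetric matrix `c`, and `Q p`
the (unique, by Lax–Milgram) solution of `B(v, Q p) + (c·T v)·p = 0` for all `v`, the matrix `R`
defined by `pᵀ R y = −(c·y)·T(Q p)` is symmetric. -/
theorem stmt_17 {V : Type*} [NormedAddCommGroup V] [InnerProductSpace ℝ V] [CompleteSpace V]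
    (d : ℕ) (hd : 1 ≤ d)
    (B : V →L[ℝ] V →L[ℝ] ℝ) (μ : ℝ) (hμ : 0 < μ)
    (hcoercive : ∀ v : V, B v v ≥ μ * ‖v‖ ^ 2)
    (hsymm : ∀ u v : V, B u v = B v u)
    (T : V →L[ℝ] (Fin d → ℝ))
    (c : Matrix (Fin d) (Fin d) ℝ) (hc : cᵀ = c)
    (Q : (Fin d → ℝ) → V)
    (hQ : ∀ (p : Fin d → ℝ) (v : V), B v (Q p) + (c *ᵥ T v) ⬝ᵥ p = 0)
    (R : Matrix (Fin d) (Fin d) ℝ)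
    (hR : ∀ p y : Fin d → ℝ, p ⬝ᵥ R *ᵥ y = -((c *ᵥ y) ⬝ᵥ T (Q p))) :
    ∀ p y : Fin d → ℝ, p ⬝ᵥ R *ᵥ y = y ⬝ᵥ R *ᵥ p :=
  stmt_17_general d B hsymm T c hc Q hQ R hR
end

section
/- Let V be a real Hilbert space, let d ≥ 1, let B : V × V → ℝ be a bounded bilinear form that is coercive (there is μ > 0 with B(v,v) ≥ μ‖v‖² for all v ∈ V), let T : V → ℝ^d be a bounded linear map, and let c ∈ ℝ^{d×d} be a symmetric matrix. For each p ∈ ℝ^d let Q_p ∈ V be the unique element (given by the Lax–Milgram theorem) with B(v, Q_p) + (c·T(v))·p = 0 for all v ∈ V, and define R ∈ ℝ^{d×d} by pᵀ R y := −(c·y)·T(Q_p). Then for every p ∈ ℝ^d one has pᵀ R p = B(Q_p, Q_p) ≥ μ‖Q_p‖² ≥ 0; in particular pᵀ R p ≥ 0 for all p ∈ ℝ^d. -/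
open Matrix

theorem Matrix.IsSymm.mulVec_dotProduct_comm {n α : Type*} [Fintype n] [CommSemiring α]
    {c : Matrix n n α} (hc : c.IsSymm) (x y : n → α) :
    (c *ᵥ x) ⬝ᵥ y = (c *ᵥ y) ⬝ᵥ x := by
  rw [dotProduct_comm, ← dotProduct_transpose_mulVec, hc.eq, dotProduct_comm]

/-- Take `v = Q p` in the equation defining `Q p`; symmetry of `c` matches the two pairings. -/
theorem dotProduct_mulVec_self_eq_energy {V n α : Type*} [Fintype n] [CommRing α]
    (B : V → V → α) (T : V → n → α) {c : Matrix n n α} (hc : c.IsSymm) {Q : (n → α) → V}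
    (hQ : ∀ (p : n → α) (v : V), B v (Q p) + (c *ᵥ T v) ⬝ᵥ p = 0)
    {R : Matrix n n α} (hR : ∀ p y : n → α, p ⬝ᵥ R *ᵥ y = -((c *ᵥ y) ⬝ᵥ T (Q p)))
    (p : n → α) :
    p ⬝ᵥ R *ᵥ p = B (Q p) (Q p) := by
  rw [hR, hc.mulVec_dotProduct_comm, ← add_eq_zero_iff_neg_eq'.mp (hQ p (Q p))]

theorem stmt_18_general {V : Type*} [NormedAddCommGroup V] [InnerProductSpace ℝ V]
    (d : ℕ)
    (B : V →L[ℝ] V →L[ℝ] ℝ) (μ : ℝ) (hμ : 0 < μ)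
    (hcoercive : ∀ v : V, B v v ≥ μ * ‖v‖ ^ 2)
    (T : V →L[ℝ] (Fin d → ℝ))
    (c : Matrix (Fin d) (Fin d) ℝ) (hc : cᵀ = c)
    (Q : (Fin d → ℝ) → V)
    (hQ : ∀ (p : Fin d → ℝ) (v : V), B v (Q p) + (c *ᵥ T v) ⬝ᵥ p = 0)
    (R : Matrix (Fin d) (Fin d) ℝ)
    (hR : ∀ p y : Fin d → ℝ, p ⬝ᵥ R *ᵥ y = -((c *ᵥ y) ⬝ᵥ T (Q p))) :
    ∀ p : Fin d → ℝ,
      p ⬝ᵥ R *ᵥ p = B (Q p) (Q p) ∧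
      B (Q p) (Q p) ≥ μ * ‖Q p‖ ^ 2 ∧
      0 ≤ p ⬝ᵥ R *ᵥ p := by
  intro p
  have henergy := dotProduct_mulVec_self_eq_energy (B · ·) T hc hQ hR p
  have hcoercive_Q := hcoercive (Q p)
  refine ⟨henergy, hcoercive_Q, ?_⟩
  rw [henergy]
  exact le_trans (by positivity) hcoercive_Q

/-- Positivity of the sensitivity matrix: with `B` a bounded coercive bilinear form on a real
Hilbert space `V`, `T : V → ℝ^d` bounded linear, `c` a symmetric matrix, `Q p` the (unique, by
Lax–Milgram) solution of `B(v, Q p) + (c·T v)·p = 0` for all `v`, and `R` defined by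
`pᵀ R y = −(c·y)·T(Q p)`, one has `pᵀ R p = B(Q p, Q p) ≥ μ‖Q p‖² ≥ 0` for every `p`. -/
theorem stmt_18 {V : Type*} [NormedAddCommGroup V] [InnerProductSpace ℝ V] [CompleteSpace V]
    (d : ℕ) (hd : 1 ≤ d)
    (B : V →L[ℝ] V →L[ℝ] ℝ) (μ : ℝ) (hμ : 0 < μ)
    (hcoercive : ∀ v : V, B v v ≥ μ * ‖v‖ ^ 2)
    (T : V →L[ℝ] (Fin d → ℝ))
    (c : Matrix (Fin d) (Fin d) ℝ) (hc : cᵀ = c)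
    (Q : (Fin d → ℝ) → V)
    (hQ : ∀ (p : Fin d → ℝ) (v : V), B v (Q p) + (c *ᵥ T v) ⬝ᵥ p = 0)
    (R : Matrix (Fin d) (Fin d) ℝ)
    (hR : ∀ p y : Fin d → ℝ, p ⬝ᵥ R *ᵥ y = -((c *ᵥ y) ⬝ᵥ T (Q p))) :
    ∀ p : Fin d → ℝ,
      p ⬝ᵥ R *ᵥ p = B (Q p) (Q p) ∧
      B (Q p) (Q p) ≥ μ * ‖Q p‖ ^ 2 ∧
      0 ≤ p ⬝ᵥ R *ᵥ p :=
  stmt_18_general d B μ hμ hcoercive T c hc Q hQ R hR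
end
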